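/- arXiv:2005.02085 — 8 statements merged into one kernel-verified Lean document; each statement's English description precedes it below -/
import Mathlib

section
/- Let 𝕜 be ℝ or ℂ, let X be a nontrivial Banach space over 𝕜, and let p ∈ [1, ∞). Then the set of surjective continuous linear operators T : ℓp(X) → ℓp(X) is spaceable in the space L(ℓp(X)) of continuous linear operators; more precisely, there exists a closed 𝕜-linear subspace W of L(ℓp(X)) with dim W = 𝔠 such that every nonzero element of W is a surjective operator. -/
open scoped ENNReal
set_option linter.unusedSectionVars false
set_option maxHeartbeats 1000000

namespace SurjSpaceable

open Cardinal

noncomputable section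

/-- A fixed pairing bijection. -/
def ee : ℕ × ℕ ≃ ℕ := Denumerable.eqv (ℕ × ℕ)

variable {𝕜 X : Type} [RCLike 𝕜] [NormedAddCommGroup X] [NormedSpace 𝕜 X]
  [CompleteSpace X] {p : ℝ≥0∞} [Fact (1 ≤ p)]

theorem p_ne_zero : p ≠ 0 := by
  have h : (1 : ℝ≥0∞) ≤ p := Fact.out
  intro h0; rw [h0] at h; exact (not_le.2 zero_lt_one) h

theorem ptoReal_pos (hp : p ≠ ∞) : 0 < p.toReal :=
  ENNReal.toReal_pos p_ne_zero hp

/-- `lp.single` with the constant family made explicit. -/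
abbrev sing (p : ℝ≥0∞) (i : ℕ) (v : X) : lp (fun _ : ℕ => X) p :=
  lp.single (E := fun _ : ℕ => X) p i v

theorem sing_apply_self (i : ℕ) (v : X) : (sing p i v) i = v :=
  lp.single_apply_self (E := fun _ : ℕ => X) p i v

theorem sing_apply_ne (i : ℕ) (v : X) {j : ℕ} (h : j ≠ i) : (sing p i v) j = 0 :=
  lp.single_apply_ne (E := fun _ : ℕ => X) p i v h

theorem sing_smul (i : ℕ) (v : X) (c : 𝕜) : sing p i (c • v) = c • sing p i v :=
  lp.single_smul (E := fun _ : ℕ => X) p i c v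

theorem sing_zero (i : ℕ) : sing p i (0 : X) = (0 : lp (fun _ : ℕ => X) p) := by
  ext j
  rcases eq_or_ne j i with rfl | h
  · rw [sing_apply_self]; rfl
  · rw [sing_apply_ne i 0 h]; rfl

theorem norm_sing (hp : p ≠ ∞) (i : ℕ) (v : X) : ‖sing p i v‖ = ‖v‖ :=
  lp.norm_single (E := fun _ : ℕ => X) (pos_iff_ne_zero.2 (p_ne_zero (p := p))) i v

theorem hasSum_sing (hp : p ≠ ∞) (x : lp (fun _ : ℕ => X) p) :
    HasSum (fun i : ℕ => sing p i (x i)) x :=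
  lp.hasSum_single hp x

/-- An operator vanishing on all "singles" is zero (for `p < ∞`). -/
theorem eq_zero_of_singles (hp : p ≠ ∞)
    (T : lp (fun _ : ℕ => X) p →L[𝕜] lp (fun _ : ℕ => X) p)
    (h : ∀ (i : ℕ) (v : X), T (sing p i v) = 0) : T = 0 := by
  refine ContinuousLinearMap.ext fun x => ?_
  have h1 := (hasSum_sing hp x).mapL T
  simp only [h] at h1
  simpa using h1.unique hasSum_zero

theorem memℓp_comp_injective (hp : p ≠ ∞) (x : lp (fun _ : ℕ => X) p) {f : ℕ → ℕ}
    (hf : Function.Injective f) : Memℓp (fun j => x (f j)) p := by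
  apply memℓp_gen
  exact ((lp.memℓp x).summable (ptoReal_pos hp)).comp_injective hf

/-- Pre-composition with an injective map, as a continuous linear operator on `ℓp`. -/
def compOp (hp : p ≠ ∞) (f : ℕ → ℕ) (hf : Function.Injective f) :
    lp (fun _ : ℕ => X) p →L[𝕜] lp (fun _ : ℕ => X) p :=
  LinearMap.mkContinuous
    { toFun := fun x => (⟨fun j => x (f j), memℓp_comp_injective hp x hf⟩ : lp (fun _ : ℕ => X) p)
      map_add' := by intro a b; ext j; simp [lp.coeFn_add]; rfl
      map_smul' := by intro c a; ext j; simp [lp.coeFn_smul] }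
    1
    (by
      intro x
      rw [one_mul]
      set y : lp (fun _ : ℕ => X) p := ⟨fun j => x (f j), memℓp_comp_injective hp x hf⟩
      have hy := lp.hasSum_norm (ptoReal_pos hp) y
      have hx := lp.hasSum_norm (ptoReal_pos hp) x
      have hle : ‖y‖ ^ p.toReal ≤ ‖x‖ ^ p.toReal := by
        rw [hy.tsum_eq.symm, hx.tsum_eq.symm]
        refine hy.summable.tsum_le_tsum_of_inj f hf (fun c _ => ?_) (fun j => le_of_eq rfl)
          hx.summable
        positivity
      exact (Real.rpow_le_rpow_iff (norm_nonneg y) (norm_nonneg x) (ptoReal_pos hp)).1 hle)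

@[simp] theorem compOp_apply (hp : p ≠ ∞) (f : ℕ → ℕ) (hf : Function.Injective f)
    (x : lp (fun _ : ℕ => X) p) (j : ℕ) :
    (compOp (𝕜 := 𝕜) hp f hf x) j = x (f j) := rfl

theorem compOp_single_eq (hp : p ≠ ∞) (f : ℕ → ℕ) (hf : Function.Injective f) (j : ℕ) (v : X) :
    compOp (𝕜 := 𝕜) hp f hf (sing p (f j) v) = sing p j v := by
  ext j'
  rw [compOp_apply]
  rcases eq_or_ne j' j with rfl | hne
  · rw [sing_apply_self, sing_apply_self]
  · rw [sing_apply_ne (f j) v (fun h => hne (hf h)), sing_apply_ne j v hne]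

theorem compOp_single_ne (hp : p ≠ ∞) (f : ℕ → ℕ) (hf : Function.Injective f) {i : ℕ}
    (hi : i ∉ Set.range f) (v : X) :
    compOp (𝕜 := 𝕜) hp f hf (sing p i v) = 0 := by
  ext j'
  rw [compOp_apply]
  have : f j' ≠ i := fun h => hi ⟨j', h⟩
  rw [sing_apply_ne i v this]
  rfl

theorem norm_compOp_le (hp : p ≠ ∞) (f : ℕ → ℕ) (hf : Function.Injective f) :
    ‖compOp (𝕜 := 𝕜) (X := X) (p := p) hp f hf‖ ≤ 1 :=
  LinearMap.mkContinuous_norm_le _ zero_le_one _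

def ιn (n : ℕ) : ℕ → ℕ := fun j => ee (n, j)

theorem ιn_inj (n : ℕ) : Function.Injective (ιn n) := fun a b h => by
  simpa using ee.injective h

theorem not_mem_range_ιn {m n j : ℕ} (h : m ≠ n) : ee (n, j) ∉ Set.range (ιn m) := by
  rintro ⟨j', hj'⟩
  have := ee.injective hj'
  simp only [Prod.mk.injEq] at this
  exact h this.1

/-- The basic block operators. -/
def Sop (hp : p ≠ ∞) (n : ℕ) : lp (fun _ : ℕ => X) p →L[𝕜] lp (fun _ : ℕ => X) p :=
  compOp hp (ιn n) (ιn_inj n)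

theorem Sop_single_eq (hp : p ≠ ∞) (n j : ℕ) (v : X) :
    Sop (𝕜 := 𝕜) hp n (sing p (ee (n, j)) v) = sing p j v :=
  compOp_single_eq hp (ιn n) (ιn_inj n) j v

theorem Sop_single_ne (hp : p ≠ ∞) {m n : ℕ} (j : ℕ) (hm : m ≠ n) (v : X) :
    Sop (𝕜 := 𝕜) hp m (sing p (ee (n, j)) v) = 0 :=
  compOp_single_ne hp (ιn m) (ιn_inj m) (not_mem_range_ιn hm) v

variable (ψ : lp (fun _ : ℕ => X) p →L[𝕜] 𝕜) (v0 : X)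

/-- Coefficients extracted from an operator. -/
def coeffs (T : lp (fun _ : ℕ => X) p →L[𝕜] lp (fun _ : ℕ => X) p) (n : ℕ) : 𝕜 :=
  ψ (T (sing p (ee (n, 0)) v0))

/-- The subspace of operators. -/
def W : Submodule 𝕜 (lp (fun _ : ℕ => X) p →L[𝕜] lp (fun _ : ℕ => X) p) where
  carrier := {T | ∀ (n j : ℕ) (v : X),
    T (sing p (ee (n, j)) v) = coeffs ψ v0 T n • sing p j v}
  add_mem' := fun {a b} ha hb => by
    intro n j v
    simp only [ContinuousLinearMap.add_apply, coeffs, map_add, ha n j v, hb n j v, add_smul]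
  zero_mem' := by intro n j v; simp [coeffs]
  smul_mem' := fun c {T} hT => by
    intro n j v
    simp only [ContinuousLinearMap.smul_apply, coeffs, map_smul, hT n j v, smul_smul,
      smul_eq_mul]

theorem mem_W_iff {T : lp (fun _ : ℕ => X) p →L[𝕜] lp (fun _ : ℕ => X) p} :
    T ∈ W ψ v0 ↔ ∀ (n j : ℕ) (v : X),
      T (sing p (ee (n, j)) v) = coeffs ψ v0 T n • sing p j v := Iff.rfl

/-- `coeffs` as a linear map. -/
def coeffsL : (lp (fun _ : ℕ => X) p →L[𝕜] lp (fun _ : ℕ => X) p) →ₗ[𝕜] (ℕ → 𝕜) where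
  toFun T := coeffs ψ v0 T
  map_add' := by intro a b; funext n; simp [coeffs]
  map_smul' := by intro c a; funext n; simp [coeffs]

theorem isClosed_W : IsClosed ((W (p := p) ψ v0 :
    Set (lp (fun _ : ℕ => X) p →L[𝕜] lp (fun _ : ℕ => X) p))) := by
  have hrep : ((W (p := p) ψ v0 :
      Set (lp (fun _ : ℕ => X) p →L[𝕜] lp (fun _ : ℕ => X) p))) =
      ⋂ (n : ℕ) (j : ℕ) (v : X),
        {T : lp (fun _ : ℕ => X) p →L[𝕜] lp (fun _ : ℕ => X) p |
          T (sing p (ee (n, j)) v) = (ψ (T (sing p (ee (n, 0)) v0))) • sing p j v} := by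
    ext T
    simp only [Set.mem_iInter, Set.mem_setOf_eq, SetLike.mem_coe]
    exact Iff.rfl
  rw [hrep]
  refine isClosed_iInter fun n => isClosed_iInter fun j => isClosed_iInter fun v => ?_
  refine isClosed_eq ((ContinuousLinearMap.apply 𝕜 (lp (fun _ : ℕ => X) p) (sing p (ee (n, j)) v)).continuous) ?_
  exact (ψ.continuous.comp
    (ContinuousLinearMap.apply 𝕜 (lp (fun _ : ℕ => X) p) (sing p (ee (n, 0)) v0)).continuous).smul continuous_const

theorem surjective_of_mem (hp : p ≠ ∞)
    {T : lp (fun _ : ℕ => X) p →L[𝕜] lp (fun _ : ℕ => X) p}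
    (hT : T ∈ W ψ v0) (hT0 : T ≠ 0) : Function.Surjective T := by
  have hTprop : ∀ (n j : ℕ) (v : X),
      T (sing p (ee (n, j)) v) = coeffs ψ v0 T n • sing p j v := (mem_W_iff ψ v0).1 hT
  have hex : ∃ n0, coeffs ψ v0 T n0 ≠ 0 := by
    by_contra h
    push_neg at h
    apply hT0
    apply eq_zero_of_singles hp
    intro i v
    have h2 := hTprop (ee.symm i).1 (ee.symm i).2 v
    rw [show ((ee.symm i).1, (ee.symm i).2) = ee.symm i from rfl, ee.apply_symm_apply] at h2
    rw [h2, h _, zero_smul]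
  obtain ⟨n0, hn0⟩ := hex
  intro y
  set c : 𝕜 := (coeffs ψ v0 T n0)⁻¹ with hc
  set g : ℕ → X := fun i => if (ee.symm i).1 = n0 then c • y (ee.symm i).2 else 0 with hg
  have hgι : ∀ j, g (ιn n0 j) = c • y j := by
    intro j; simp [hg, ιn]
  have hg0 : ∀ i ∉ Set.range (ιn n0), g i = 0 := by
    intro i hi
    have hne : (ee.symm i).1 ≠ n0 := by
      intro h1
      refine hi ⟨(ee.symm i).2, ?_⟩
      rw [ιn, ← h1, show ((ee.symm i).1, (ee.symm i).2) = ee.symm i from rfl,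
        ee.apply_symm_apply]
    simp [hg, hne]
  have hmem : Memℓp g p := by
    apply memℓp_gen
    have hsum : Summable (fun j => ‖c • y j‖ ^ p.toReal) := by
      have h1 := ((lp.memℓp y).summable (ptoReal_pos hp)).mul_left (‖c‖ ^ p.toReal)
      refine h1.congr fun j => ?_
      rw [norm_smul, Real.mul_rpow (norm_nonneg _) (norm_nonneg _)]
    refine (Function.Injective.summable_iff (ιn_inj n0) ?_).1 ?_
    · intro i hi
      rw [hg0 i hi, norm_zero, Real.zero_rpow (ptoReal_pos hp).ne']
    · refine hsum.congr fun j => ?_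
      simp only [Function.comp]
      rw [hgι j]
  set x : lp (fun _ : ℕ => X) p := ⟨g, hmem⟩ with hx
  refine ⟨x, ?_⟩
  have hxf : ∀ i, x i = g i := fun i => rfl
  have h1 : HasSum (fun i => T (sing p i (x i))) (T x) := (hasSum_sing hp x).mapL T
  have h2 : HasSum (fun j => T (sing p (ιn n0 j) (x (ιn n0 j)))) (T x) := by
    refine (Function.Injective.hasSum_iff (ιn_inj n0) ?_).2 h1
    intro i hi
    rw [hxf, hg0 i hi, sing_zero, map_zero]
  have h3 : (fun j => T (sing p (ιn n0 j) (x (ιn n0 j)))) = fun j => sing p j (y j) := by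
    funext j
    rw [hxf, hgι j]
    show T (sing p (ee (n0, j)) (c • y j)) = sing p j (y j)
    rw [hTprop n0 j (c • y j), sing_smul, smul_smul, hc, mul_inv_cancel₀ hn0, one_smul]
  rw [h3] at h2
  exact h2.unique (hasSum_sing hp y)

theorem summable_smul_Sop (hp : p ≠ ∞) {a : ℕ → 𝕜} (ha : Summable fun n => ‖a n‖) :
    Summable (fun n => a n • Sop (𝕜 := 𝕜) (X := X) (p := p) hp n) := by
  refine Summable.of_norm ?_
  refine Summable.of_nonneg_of_le (fun n => norm_nonneg _) (fun n => ?_) ha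
  calc ‖a n • Sop (𝕜 := 𝕜) (X := X) (p := p) hp n‖
      ≤ ‖a n‖ * ‖Sop (𝕜 := 𝕜) (X := X) (p := p) hp n‖ := ContinuousLinearMap.opNorm_smul_le _ _
    _ ≤ ‖a n‖ * 1 := mul_le_mul_of_nonneg_left (norm_compOp_le hp _ _) (norm_nonneg _)
    _ = ‖a n‖ := mul_one _

/-- Operators with prescribed summable coefficients. -/
def Top (hp : p ≠ ∞) (a : ℕ → 𝕜) : lp (fun _ : ℕ => X) p →L[𝕜] lp (fun _ : ℕ => X) p :=
  ∑' n, a n • Sop (𝕜 := 𝕜) hp n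

theorem hasSum_Top (hp : p ≠ ∞) {a : ℕ → 𝕜} (ha : Summable fun n => ‖a n‖) :
    HasSum (fun n => a n • Sop (𝕜 := 𝕜) (X := X) (p := p) hp n) (Top hp a) :=
  (summable_smul_Sop hp ha).hasSum

theorem Top_single (hp : p ≠ ∞) {a : ℕ → 𝕜} (ha : Summable fun n => ‖a n‖)
    (n j : ℕ) (v : X) :
    Top (𝕜 := 𝕜) hp a (sing p (ee (n, j)) v) = a n • sing p j v := by
  have h1 := (hasSum_Top hp ha).mapL
    (ContinuousLinearMap.apply 𝕜 (lp (fun _ : ℕ => X) p) (sing p (ee (n, j)) v))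
  simp only [ContinuousLinearMap.apply_apply] at h1
  have h2 : (fun m => (a m • Sop (𝕜 := 𝕜) hp m) (sing p (ee (n, j)) v)) =
      fun m => if m = n then a n • sing p j v else 0 := by
    funext m
    rcases eq_or_ne m n with rfl | hm
    · simp [ContinuousLinearMap.smul_apply, Sop_single_eq]
    · simp only [ContinuousLinearMap.smul_apply, Sop_single_ne hp j hm, smul_zero, if_neg hm]
  rw [h2] at h1
  exact h1.unique (hasSum_ite_eq n _)

theorem coeffs_Top (hp : p ≠ ∞) (hψ : ψ (sing p 0 v0) = 1) {a : ℕ → 𝕜}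
    (ha : Summable fun n => ‖a n‖) : coeffs ψ v0 (Top hp a) = a := by
  funext n
  rw [coeffs, Top_single hp ha n 0 v0, map_smul, hψ, smul_eq_mul, mul_one]

theorem Top_mem (hp : p ≠ ∞) (hψ : ψ (sing p 0 v0) = 1) {a : ℕ → 𝕜}
    (ha : Summable fun n => ‖a n‖) : Top (𝕜 := 𝕜) hp a ∈ W ψ v0 := by
  refine (mem_W_iff ψ v0).2 fun n j v => ?_
  rw [Top_single hp ha n j v, coeffs_Top ψ v0 hp hψ ha]

theorem eq_of_coeffs_eq (hp : p ≠ ∞)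
    {T T' : lp (fun _ : ℕ => X) p →L[𝕜] lp (fun _ : ℕ => X) p}
    (hT : T ∈ W ψ v0) (hT' : T' ∈ W ψ v0)
    (h : coeffs ψ v0 T = coeffs ψ v0 T') : T = T' := by
  have hsub : T - T' = 0 := by
    apply eq_zero_of_singles hp
    intro i v
    have e1 := (mem_W_iff ψ v0).1 hT (ee.symm i).1 (ee.symm i).2 v
    have e2 := (mem_W_iff ψ v0).1 hT' (ee.symm i).1 (ee.symm i).2 v
    rw [show ((ee.symm i).1, (ee.symm i).2) = ee.symm i from rfl, ee.apply_symm_apply] at e1 e2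
    rw [ContinuousLinearMap.sub_apply, e1, e2, h, sub_self]
  exact sub_eq_zero.1 hsub

theorem rank_W_le (hp : p ≠ ∞) :
    Module.rank 𝕜 ↥(W (p := p) ψ v0) ≤ Cardinal.continuum := by
  have hinj : Function.Injective ((coeffsL (p := p) ψ v0).comp (W (p := p) ψ v0).subtype) := by
    intro S S' h
    exact Subtype.ext (eq_of_coeffs_eq ψ v0 hp S.2 S'.2 h)
  have h1 := LinearMap.rank_le_of_injective _ hinj
  refine h1.trans ?_
  have h2 : Module.rank 𝕜 (ℕ → 𝕜) ≤ #(ℕ → 𝕜) := rank_le_card 𝕜 (ℕ → 𝕜)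
  refine h2.trans ?_
  have hK : #𝕜 ≤ Cardinal.continuum := by
    have hinj2 : Function.Injective (fun z : 𝕜 => (RCLike.re z, RCLike.im z)) := by
      intro z w h
      simp only [Prod.mk.injEq] at h
      exact RCLike.ext h.1 h.2
    calc #𝕜 ≤ #(ℝ × ℝ) := Cardinal.mk_le_of_injective hinj2
      _ ≤ Cardinal.continuum := by
          rw [Cardinal.mk_prod, Cardinal.mk_real, Cardinal.lift_id]
          exact le_of_eq (Cardinal.mul_eq_self Cardinal.aleph0_le_continuum)
  calc #(ℕ → 𝕜) = #𝕜 ^ (#ℕ) := (Cardinal.power_def 𝕜 ℕ).symm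
    _ ≤ Cardinal.continuum ^ (#ℕ) := Cardinal.power_le_power_right hK
    _ = Cardinal.continuum := by rw [Cardinal.mk_nat]; exact Cardinal.continuum_power_aleph0

theorem continuum_le_rank_W (hp : p ≠ ∞) (hψ : ψ (sing p 0 v0) = 1) :
    Cardinal.continuum ≤ Module.rank 𝕜 ↥(W (p := p) ψ v0) := by
  classical
  set q : Set.Ioo (0:ℝ) 1 → (ℕ → 𝕜) := fun t n => (((t : ℝ) : 𝕜)) ^ n with hq
  have hsum : ∀ t : Set.Ioo (0:ℝ) 1, Summable fun n => ‖q t n‖ := by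
    intro t
    have heq : (fun n => ‖q t n‖) = fun n => (t : ℝ) ^ n := by
      funext n
      rw [hq]
      rw [norm_pow, RCLike.norm_ofReal, abs_of_pos t.2.1]
    rw [heq]
    exact summable_geometric_of_lt_one t.2.1.le t.2.2
  have hqind : LinearIndependent 𝕜 q := by
    have h1 := linearIndependent_monoidHom (Multiplicative ℕ) 𝕜
    have hinj : Function.Injective
        (fun t : Set.Ioo (0:ℝ) 1 => powersHom 𝕜 (((t : ℝ) : 𝕜))) := by
      intro s t h
      have h3 := congrArg (fun f : Multiplicative ℕ →* 𝕜 => f (Multiplicative.ofAdd 1)) h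
      simp only [powersHom_apply, toAdd_ofAdd, pow_one] at h3
      exact Subtype.ext (by exact_mod_cast h3)
    have h2 := h1.comp _ hinj
    have h3 := h2.map' (LinearEquiv.funCongrLeft 𝕜 𝕜
        (Multiplicative.ofAdd : ℕ ≃ Multiplicative ℕ)).toLinearMap
      (LinearEquiv.ker _)
    have h4 : (⇑(LinearEquiv.funCongrLeft 𝕜 𝕜
          (Multiplicative.ofAdd : ℕ ≃ Multiplicative ℕ)).toLinearMap ∘
        ((fun f : Multiplicative ℕ →* 𝕜 => (f : Multiplicative ℕ → 𝕜)) ∘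
          fun t : Set.Ioo (0:ℝ) 1 => powersHom 𝕜 (((t : ℝ) : 𝕜)))) = q := by
      funext t n
      rfl
    rw [h4] at h3
    exact h3
  set ind : Set.Ioo (0:ℝ) 1 → ↥(W (p := p) ψ v0) :=
    fun t => ⟨Top hp (q t), Top_mem ψ v0 hp hψ (hsum t)⟩ with hind
  have hcomp : (⇑((coeffsL (p := p) ψ v0).comp ((W (p := p) ψ v0)).subtype) ∘ ind) = q := by
    funext t
    show coeffs ψ v0 (Top hp (q t)) = q t
    exact coeffs_Top ψ v0 hp hψ (hsum t)
  have hindli : LinearIndependent 𝕜 ind :=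
    LinearIndependent.of_comp ((coeffsL (p := p) ψ v0).comp ((W (p := p) ψ v0)).subtype)
      (by rw [hcomp]; exact hqind)
  calc Cardinal.continuum = #(Set.Ioo (0:ℝ) 1) := (Cardinal.mk_Ioo_real zero_lt_one).symm
    _ ≤ Module.rank 𝕜 ↥(W (p := p) ψ v0) := hindli.cardinal_le_rank

end

end SurjSpaceable

open SurjSpaceable in
/-- The set of surjective continuous linear operators on `ℓp(X)` (for `1 ≤ p < ∞`,
`X` a nontrivial Banach space over `𝕜 = ℝ` or `ℂ`) is spaceable: there is a closed
subspace `W` of `L(ℓp(X))` of dimension `𝔠` all of whose nonzero elements are surjective. -/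
theorem surjective_operators_spaceable_lp
    {𝕜 X : Type} [RCLike 𝕜] [NormedAddCommGroup X] [NormedSpace 𝕜 X]
    [CompleteSpace X] [Nontrivial X] (p : ℝ≥0∞) [Fact (1 ≤ p)] (hp : p ≠ ∞) :
    ∃ W : Submodule 𝕜 (lp (fun _ : ℕ => X) p →L[𝕜] lp (fun _ : ℕ => X) p),
      IsClosed (W : Set (lp (fun _ : ℕ => X) p →L[𝕜] lp (fun _ : ℕ => X) p)) ∧
      Module.rank 𝕜 W = Cardinal.continuum ∧
      ∀ T ∈ W, T ≠ 0 → Function.Surjective ⇑T := by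
  obtain ⟨v0, hv0⟩ := exists_ne (0 : X)
  have hu : sing p 0 v0 ≠ 0 := by
    intro h
    apply hv0
    have h0 : (sing p 0 v0) 0 = v0 := sing_apply_self 0 v0
    rw [h] at h0
    exact h0.symm
  obtain ⟨φ, hφ1, hφ2⟩ := exists_dual_vector 𝕜 (sing p 0 v0) (norm_ne_zero_iff.2 hu)
  set ψ : lp (fun _ : ℕ => X) p →L[𝕜] 𝕜 := ((‖sing p 0 v0‖ : 𝕜))⁻¹ • φ with hψdef
  have hψ : ψ (sing p 0 v0) = 1 := by
    rw [hψdef]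
    simp only [ContinuousLinearMap.smul_apply, hφ2, smul_eq_mul]
    refine inv_mul_cancel₀ ?_
    simpa [RCLike.ofReal_eq_zero, norm_eq_zero] using hu
  refine ⟨W ψ v0, isClosed_W ψ v0, ?_, ?_⟩
  · exact le_antisymm (rank_W_le ψ v0 hp) (continuum_le_rank_W ψ v0 hp hψ)
  · intro T hT hT0
    exact surjective_of_mem ψ v0 hp hT hT0
end

section
/- Let 𝕜 be ℝ or ℂ and let X be a nontrivial Banach space over 𝕜. Then the set of surjective continuous linear operators T : c₀(X) → c₀(X) is spaceable in L(c₀(X)); more precisely, there exists a closed 𝕜-linear subspace W of L(c₀(X)) with dim W = 𝔠 such that every nonzero element of W is a surjective operator. -/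
open ZeroAtInfty Filter Function

noncomputable section
namespace SurjSpaceable

variable {𝕜 X : Type} [RCLike 𝕜] [NormedAddCommGroup X] [NormedSpace 𝕜 X] [CompleteSpace X]

local notation "ℓ¹" => lp (fun _ : ℕ => (𝕜:Type)) 1

lemma c_summable (c : ℓ¹) : Summable fun k => ‖c k‖ := by
  have := (lp.memℓp c).summable (p := 1) (by norm_num)
  simpa using this

lemma c_norm (c : ℓ¹) : ‖c‖ = ∑' k, ‖c k‖ := by
  have := lp.norm_eq_tsum_rpow (p := 1) (by norm_num) c
  simpa using this

lemma norm_apply_le (x : C₀(ℕ, X)) (n : ℕ) : ‖x n‖ ≤ ‖x‖ :=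
  (x.toBCF.norm_coe_le_norm n).trans_eq ZeroAtInftyContinuousMap.norm_toBCF_eq_norm

lemma summable_term (c : ℓ¹) (x : C₀(ℕ, X)) (j : ℕ) :
    Summable fun k => c k • x (Nat.pair k j) :=
  Summable.of_norm_bounded ((c_summable c).mul_right ‖x‖) fun k => by
    rw [norm_smul]
    exact mul_le_mul_of_nonneg_left (norm_apply_le x _) (norm_nonneg _)

/-- the underlying function of `T c x`. -/
def Tfun (c : ℓ¹) (x : C₀(ℕ, X)) : ℕ → X := fun j => ∑' k, c k • x (Nat.pair k j)

lemma Tfun_norm_le (c : ℓ¹) (x : C₀(ℕ, X)) {j : ℕ} {B : ℝ} (hB : 0 ≤ B)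
    (h : ∀ n, j ≤ n → ‖x n‖ ≤ B) : ‖Tfun c x j‖ ≤ ‖c‖ * B := by
  have hsn : Summable fun k => ‖c k • x (Nat.pair k j)‖ :=
    Summable.of_nonneg_of_le (fun k => norm_nonneg _)
      (fun k => by rw [norm_smul]; exact mul_le_mul_of_nonneg_left (norm_apply_le x _) (norm_nonneg _))
      ((c_summable c).mul_right ‖x‖)
  calc ‖Tfun c x j‖ ≤ ∑' k, ‖c k • x (Nat.pair k j)‖ := norm_tsum_le_tsum_norm hsn
    _ ≤ ∑' k, ‖c k‖ * B := by
        refine Summable.tsum_le_tsum (fun k => ?_) hsn ((c_summable c).mul_right B)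
        rw [norm_smul]
        exact mul_le_mul_of_nonneg_left (h _ (Nat.right_le_pair k j)) (norm_nonneg _)
    _ = (∑' k, ‖c k‖) * B := tsum_mul_right
    _ = ‖c‖ * B := by rw [c_norm]

lemma Tfun_norm_le' (c : ℓ¹) (x : C₀(ℕ, X)) (j : ℕ) : ‖Tfun c x j‖ ≤ ‖c‖ * ‖x‖ :=
  Tfun_norm_le c x (norm_nonneg x) (fun n _ => norm_apply_le x n)

/-- `T c x` as an element of `C₀`. -/
def Tc0 (c : ℓ¹) (x : C₀(ℕ, X)) : C₀(ℕ, X) where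
  toFun := Tfun c x
  continuous_toFun := continuous_of_discreteTopology
  zero_at_infty' := by
    rw [cocompact_eq_cofinite, Nat.cofinite_eq_atTop, NormedAddCommGroup.tendsto_nhds_zero]
    intro ε hε
    have hc1 : (0:ℝ) < ‖c‖ + 1 := by positivity
    set ε' := ε / (‖c‖ + 1) with hε'def
    have hε' : 0 < ε' := div_pos hε hc1
    have hx : Tendsto (fun n => x n) atTop (nhds 0) := by
      have := zero_at_infty x
      rwa [cocompact_eq_cofinite, Nat.cofinite_eq_atTop] at this
    rw [NormedAddCommGroup.tendsto_nhds_zero] at hx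
    obtain ⟨N, hN⟩ := eventually_atTop.1 (hx ε' hε')
    filter_upwards [eventually_ge_atTop N] with j hj
    have hb : ‖Tfun c x j‖ ≤ ‖c‖ * ε' :=
      Tfun_norm_le c x hε'.le (fun n hn => (hN n (hj.trans hn)).le)
    calc ‖Tfun c x j‖ ≤ ‖c‖ * ε' := hb
      _ < (‖c‖ + 1) * ε' := by
          exact mul_lt_mul_of_pos_right (lt_add_one _) hε'
      _ = ε := mul_div_cancel₀ ε hc1.ne'

@[simp] lemma Tc0_apply (c : ℓ¹) (x : C₀(ℕ, X)) (j : ℕ) :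
    Tc0 c x j = ∑' k, c k • x (Nat.pair k j) := rfl

lemma norm_Tc0_le (c : ℓ¹) (x : C₀(ℕ, X)) : ‖Tc0 c x‖ ≤ ‖c‖ * ‖x‖ := by
  rw [← ZeroAtInftyContinuousMap.norm_toBCF_eq_norm, BoundedContinuousFunction.norm_le (by positivity)]
  exact fun j => Tfun_norm_le' c x j

/-- The operator `T c`. -/
def T (c : ℓ¹) : C₀(ℕ, X) →L[𝕜] C₀(ℕ, X) :=
  LinearMap.mkContinuous
    { toFun := Tc0 (X := X) c
      map_add' := fun x y => by
        ext j
        have h1 := (summable_term c x j).hasSum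
        have h2 := (summable_term c y j).hasSum
        have := (h1.add h2).tsum_eq
        simp only [Tc0_apply, ZeroAtInftyContinuousMap.coe_add, Pi.add_apply, smul_add]
        exact this
      map_smul' := fun a x => by
        ext j
        have := ((summable_term c x j).hasSum.const_smul a).tsum_eq
        simp only [Tc0_apply, ZeroAtInftyContinuousMap.coe_smul, Pi.smul_apply, RingHom.id_apply]
        rw [← this]
        exact tsum_congr fun k => (smul_comm a (c k) _).symm }
    ‖c‖ (fun x => norm_Tc0_le c x)

@[simp] lemma T_apply (c : ℓ¹) (x : C₀(ℕ, X)) (j : ℕ) :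
    T c x j = ∑' k, c k • x (Nat.pair k j) := rfl

end SurjSpaceable

namespace SurjSpaceable

variable {𝕜 X : Type} [RCLike 𝕜] [NormedAddCommGroup X] [NormedSpace 𝕜 X] [CompleteSpace X]

local notation "ℓ¹" => lp (fun _ : ℕ => (𝕜:Type)) 1

/-- `Φ` as a linear map. -/
def Φ : ℓ¹ →ₗ[𝕜] (C₀(ℕ, X) →L[𝕜] C₀(ℕ, X)) where
  toFun := T
  map_add' c d := by
    ext x j
    have := ((summable_term c x j).hasSum.add (summable_term d x j).hasSum).tsum_eq
    simp only [T_apply, ContinuousLinearMap.add_apply, ZeroAtInftyContinuousMap.coe_add,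
      Pi.add_apply, lp.coeFn_add, add_smul]
    exact this
  map_smul' a c := by
    ext x j
    have := ((summable_term c x j).hasSum.const_smul a).tsum_eq
    simp only [T_apply, RingHom.id_apply, ContinuousLinearMap.coe_smul',
      Pi.smul_apply, ZeroAtInftyContinuousMap.coe_smul, lp.coeFn_smul]
    rw [← this]
    exact tsum_congr fun k => by rw [smul_eq_mul, mul_smul]

@[simp] lemma Φ_apply (c : ℓ¹) (x : C₀(ℕ, X)) (j : ℕ) :
    Φ c x j = ∑' k, c k • x (Nat.pair k j) := rfl

/-- scalar sign. -/
def sgn (a : 𝕜) : 𝕜 := if a = 0 then 0 else (‖a‖ : 𝕜) / a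

lemma mul_sgn (a : 𝕜) : a * sgn a = (‖a‖ : 𝕜) := by
  by_cases h : a = 0
  · simp [sgn, h]
  · simp only [sgn, h, if_false]; rw [mul_comm]; exact div_mul_cancel₀ _ h

lemma norm_sgn_le (a : 𝕜) : ‖sgn a‖ ≤ 1 := by
  by_cases h : a = 0
  · simp [sgn, h]
  · have : ‖a‖ ≠ 0 := norm_ne_zero_iff.2 h
    simp [sgn, h, norm_div, RCLike.norm_ofReal, abs_of_nonneg (norm_nonneg a), this]

variable [Nontrivial X]

include 𝕜 in
lemma exists_norm_one : ∃ u : X, ‖u‖ = 1 := by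
  obtain ⟨v, hv⟩ := exists_ne (0 : X)
  have hv' : ‖v‖ ≠ 0 := norm_ne_zero_iff.2 hv
  refine ⟨((‖v‖ : 𝕜))⁻¹ • v, ?_⟩
  rw [norm_smul, norm_inv, RCLike.norm_ofReal, abs_of_nonneg (norm_nonneg v),
    inv_mul_cancel₀ hv']

/-- test vector for the norm lower bound. -/
def xs (c : ℓ¹) (s : Finset ℕ) (u : X) : C₀(ℕ, X) where
  toFun := fun n => if n.unpair.2 = 0 ∧ n.unpair.1 ∈ s then sgn (c n.unpair.1) • u else 0
  continuous_toFun := continuous_of_discreteTopology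
  zero_at_infty' := by
    rw [cocompact_eq_cofinite]
    refine Tendsto.congr' ?_ tendsto_const_nhds
    rw [Filter.EventuallyEq, eventually_cofinite]
    refine Set.Finite.subset (s.finite_toSet.image fun k => Nat.pair k 0) ?_
    intro n hn
    simp only [Set.mem_setOf_eq] at hn
    by_cases h : n.unpair.2 = 0 ∧ n.unpair.1 ∈ s
    · exact ⟨n.unpair.1, h.2, by rw [← h.1]; exact Nat.pair_unpair n⟩
    · exact (hn (by simp [h])).elim

lemma norm_xs_le (c : ℓ¹) (s : Finset ℕ) {u : X} (hu : ‖u‖ = 1) : ‖xs c s u‖ ≤ 1 := by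
  rw [← ZeroAtInftyContinuousMap.norm_toBCF_eq_norm,
    BoundedContinuousFunction.norm_le zero_le_one]
  intro n
  show ‖if n.unpair.2 = 0 ∧ n.unpair.1 ∈ s then sgn (c n.unpair.1) • u else 0‖ ≤ 1
  split
  · rw [norm_smul, hu, mul_one]; exact norm_sgn_le _
  · simp

lemma sum_le_norm_T (c : ℓ¹) (s : Finset ℕ) : ∑ k ∈ s, ‖c k‖ ≤ ‖T (X := X) c‖ := by
  obtain ⟨u, hu⟩ := exists_norm_one (𝕜 := 𝕜) (X := X)
  have h0 : T c (xs c s u) 0 = ((∑ k ∈ s, ‖c k‖ : ℝ) : 𝕜) • u := by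
    rw [T_apply]
    have hterm : ∀ k, c k • (xs c s u) (Nat.pair k 0) =
        if k ∈ s then ((‖c k‖ : ℝ) : 𝕜) • u else 0 := by
      intro k
      show c k • (if (Nat.pair k 0).unpair.2 = 0 ∧ (Nat.pair k 0).unpair.1 ∈ s
          then sgn (c (Nat.pair k 0).unpair.1) • u else 0) = _
      rw [Nat.unpair_pair]
      by_cases hk : k ∈ s
      · simp only [hk, and_self, if_true, true_and]
        rw [smul_smul, mul_sgn]
      · simp [hk]
    calc ∑' k, c k • (xs c s u) (Nat.pair k 0)
        = ∑' k, (if k ∈ s then ((‖c k‖ : ℝ) : 𝕜) • u else 0) := tsum_congr hterm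
      _ = ∑ k ∈ s, ((‖c k‖ : ℝ) : 𝕜) • u := (tsum_eq_sum (fun k hk => if_neg hk)).trans
            (Finset.sum_congr rfl fun k hk => if_pos hk)
      _ = ((∑ k ∈ s, ‖c k‖ : ℝ) : 𝕜) • u := by
          rw [← Finset.sum_smul]
          norm_cast
  have h1 : ‖T c (xs c s u) 0‖ = ∑ k ∈ s, ‖c k‖ := by
    rw [h0, norm_smul, hu, mul_one, RCLike.norm_ofReal,
      abs_of_nonneg (Finset.sum_nonneg fun k _ => norm_nonneg _)]
  calc ∑ k ∈ s, ‖c k‖ = ‖T c (xs c s u) 0‖ := h1.symm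
    _ ≤ ‖T c (xs c s u)‖ := norm_apply_le _ 0
    _ ≤ ‖T (X := X) c‖ * ‖xs c s u‖ := ContinuousLinearMap.le_opNorm _ _
    _ ≤ ‖T (X := X) c‖ := mul_le_of_le_one_right (ContinuousLinearMap.opNorm_nonneg _) (norm_xs_le c s hu)

lemma norm_T (c : ℓ¹) : ‖T (X := X) c‖ = ‖c‖ := by
  refine le_antisymm (LinearMap.mkContinuous_norm_le _ (norm_nonneg c) _) ?_
  have hs : HasSum (fun k => ‖c k‖) ‖c‖ := by
    rw [c_norm]; exact (c_summable c).hasSum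
  exact le_of_tendsto hs (Filter.Eventually.of_forall fun s => sum_le_norm_T c s)

end SurjSpaceable

namespace SurjSpaceable

variable {𝕜 X : Type} [RCLike 𝕜] [NormedAddCommGroup X] [NormedSpace 𝕜 X] [CompleteSpace X]

local notation "ℓ¹" => lp (fun _ : ℕ => (𝕜:Type)) 1

/-- preimage witness for surjectivity. -/
def pre (c : ℓ¹) (m : ℕ) (y : C₀(ℕ, X)) : C₀(ℕ, X) where
  toFun := fun n => if n.unpair.1 = m then (c m)⁻¹ • y n.unpair.2 else 0
  continuous_toFun := continuous_of_discreteTopology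
  zero_at_infty' := by
    rw [cocompact_eq_cofinite, NormedAddCommGroup.tendsto_nhds_zero]
    intro ε hε
    have hy : Tendsto (fun j => (c m)⁻¹ • y j) cofinite (nhds 0) := by
      have h1 : Tendsto (fun j => y j) cofinite (nhds (0 : X)) := by
        have := zero_at_infty y
        rwa [cocompact_eq_cofinite] at this
      simpa using h1.const_smul ((c m)⁻¹)
    rw [NormedAddCommGroup.tendsto_nhds_zero] at hy
    have hyfin : {j | ¬ ‖(c m)⁻¹ • y j‖ < ε}.Finite := by
      have := hy ε hε
      rwa [eventually_cofinite] at this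
    rw [eventually_cofinite]
    refine Set.Finite.subset (hyfin.image (Nat.pair m)) ?_
    intro n hn
    simp only [Set.mem_setOf_eq] at hn
    by_cases h : n.unpair.1 = m
    · refine ⟨n.unpair.2, ?_, by rw [← h]; exact Nat.pair_unpair n⟩
      simp only [Set.mem_setOf_eq]
      intro hlt
      exact hn (by rw [if_pos h]; exact hlt)
    · exact (hn (by rw [if_neg h]; simpa using hε)).elim

lemma T_surjective (c : ℓ¹) (hc : c ≠ 0) : Function.Surjective (T (X := X) c) := by
  have : ∃ m, c m ≠ 0 := by
    by_contra h
    push_neg at h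
    exact hc (lp.ext (funext h))
  obtain ⟨m, hm⟩ := this
  intro y
  refine ⟨pre c m y, ?_⟩
  ext j
  rw [T_apply]
  have hterm : ∀ k, k ≠ m → c k • (pre c m y) (Nat.pair k j) = 0 := by
    intro k hk
    show c k • (if (Nat.pair k j).unpair.1 = m then (c m)⁻¹ • y (Nat.pair k j).unpair.2 else 0) = 0
    rw [Nat.unpair_pair, if_neg hk, smul_zero]
  rw [tsum_eq_single m hterm]
  show c m • (if (Nat.pair m j).unpair.1 = m then (c m)⁻¹ • y (Nat.pair m j).unpair.2 else 0) = y j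
  rw [Nat.unpair_pair, if_pos rfl, smul_smul, mul_inv_cancel₀ hm, one_smul]

/-- coercion of `ℓ¹` to functions, as a linear map. -/
def coeL : ℓ¹ →ₗ[𝕜] (ℕ → 𝕜) where
  toFun := fun f => ⇑f
  map_add' := lp.coeFn_add
  map_smul' := lp.coeFn_smul

lemma coeL_injective : Function.Injective (coeL (𝕜 := 𝕜)) := fun f g h => lp.ext h

/-- geometric sequences in `ℓ¹`. -/
def geom (t : Set.Ioo (0:ℝ) 1) : ℓ¹ :=
  ⟨fun n => ((t : ℝ) : 𝕜) ^ n, by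
    apply memℓp_gen
    have hsum : Summable fun n => (t : ℝ) ^ n :=
      summable_geometric_of_lt_one t.2.1.le t.2.2
    refine hsum.congr fun n => ?_
    rw [ENNReal.toReal_one, Real.rpow_one, norm_pow, RCLike.norm_ofReal,
      abs_of_nonneg t.2.1.le]⟩

lemma geom_linearIndependent : LinearIndependent 𝕜 (geom (𝕜 := 𝕜)) := by
  have h1 : LinearIndependent 𝕜 (M := Multiplicative ℕ → 𝕜)
      (fun f => ⇑f : (Multiplicative ℕ →* 𝕜) → Multiplicative ℕ → 𝕜) :=
    linearIndependent_monoidHom (Multiplicative ℕ) 𝕜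
  have hginj : Function.Injective (fun t : Set.Ioo (0:ℝ) 1 => powersHom 𝕜 ((t : ℝ) : 𝕜)) := by
    intro t₁ t₂ h
    have h2 : ((t₁ : ℝ) : 𝕜) = ((t₂ : ℝ) : 𝕜) := by
      have := congrArg (powersHom 𝕜).symm h
      simpa using this
    exact Subtype.ext (RCLike.ofReal_injective h2)
  have h2 := h1.comp _ hginj
  refine LinearIndependent.of_comp (coeL (𝕜 := 𝕜)) ?_
  exact h2

lemma rank_lp : Module.rank 𝕜 (lp (fun _ : ℕ => (𝕜:Type)) 1) = Cardinal.continuum := by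
  refine le_antisymm ?_ ?_
  · calc Module.rank 𝕜 (lp (fun _ : ℕ => (𝕜:Type)) 1)
        ≤ Cardinal.mk (lp (fun _ : ℕ => (𝕜:Type)) 1) := rank_le_card _ _
      _ ≤ Cardinal.mk (ℕ → 𝕜) := Cardinal.mk_le_of_injective coeL_injective
      _ = Cardinal.mk 𝕜 ^ Cardinal.aleph0 := by
          rw [← Cardinal.power_def, Cardinal.mk_nat]
      _ ≤ Cardinal.continuum ^ Cardinal.aleph0 := by
          refine Cardinal.power_le_power_right ?_
          -- #𝕜 ≤ 𝔠 since 𝕜 is finite-dimensional over ℝ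
          have : FiniteDimensional ℝ 𝕜 := inferInstance
          let b := Module.finBasis ℝ 𝕜
          calc Cardinal.mk 𝕜 = Cardinal.mk (Fin (Module.finrank ℝ 𝕜) → ℝ) :=
                Cardinal.mk_congr b.equivFun.toEquiv
            _ = Cardinal.mk ℝ ^ (Module.finrank ℝ 𝕜 : Cardinal) := by
                rw [← Cardinal.power_def, Cardinal.mk_fin]
            _ ≤ Cardinal.continuum ^ Cardinal.aleph0 := by
                rw [Cardinal.mk_real]
                exact Cardinal.power_le_power_left Cardinal.continuum_ne_zero
                  (Cardinal.nat_lt_aleph0 _).le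
            _ = Cardinal.continuum := Cardinal.continuum_power_aleph0
      _ = Cardinal.continuum := Cardinal.continuum_power_aleph0
  · have := geom_linearIndependent (𝕜 := 𝕜)
    have h := this.cardinal_le_rank
    rwa [Cardinal.mk_Ioo_real one_pos] at h

end SurjSpaceable

end

/-- The set of surjective continuous linear operators on `c₀(X)` (sequences in a
nontrivial Banach space `X` over `𝕜 = ℝ` or `ℂ` converging to `0`, with the sup norm)
is spaceable: there is a closed subspace `W` of `L(c₀(X))` of dimension `𝔠` all of
whose nonzero elements are surjective. -/
theorem surjective_operators_spaceable_c0
    {𝕜 X : Type} [RCLike 𝕜] [NormedAddCommGroup X] [NormedSpace 𝕜 X]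
    [CompleteSpace X] [Nontrivial X] :
    ∃ W : Submodule 𝕜 (C₀(ℕ, X) →L[𝕜] C₀(ℕ, X)),
      IsClosed (W : Set (C₀(ℕ, X) →L[𝕜] C₀(ℕ, X))) ∧
      Module.rank 𝕜 W = Cardinal.continuum ∧
      ∀ T ∈ W, T ≠ 0 → Function.Surjective ⇑T := by
  classical
  haveI : Fact ((1 : ENNReal) ≤ 1) := ⟨le_rfl⟩
  let Φi : lp (fun _ : ℕ => (𝕜 : Type)) 1 →ₗᵢ[𝕜] (C₀(ℕ, X) →L[𝕜] C₀(ℕ, X)) :=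
    ⟨SurjSpaceable.Φ, fun c => SurjSpaceable.norm_T c⟩
  refine ⟨LinearMap.range Φi.toLinearMap, ?_, ?_, ?_⟩
  · have h : (LinearMap.range Φi.toLinearMap : Set (C₀(ℕ, X) →L[𝕜] C₀(ℕ, X))) =
        Set.range Φi := LinearMap.coe_range _
    rw [h]
    have hcs : CompleteSpace (lp (fun _ : ℕ => (𝕜 : Type)) 1) := inferInstance
    exact AntilipschitzWith.isClosed_range (α := lp (fun _ : ℕ => (𝕜 : Type)) 1)
      (β := C₀(ℕ, X) →L[𝕜] C₀(ℕ, X)) Φi.isometry.antilipschitz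
      Φi.isometry.lipschitz.uniformContinuous
  · rw [rank_range_of_injective _ Φi.injective, SurjSpaceable.rank_lp]
  · rintro T' hT' hne
    obtain ⟨c, rfl⟩ := hT'
    have hc : c ≠ 0 := by rintro rfl; exact hne (map_zero _)
    exact SurjSpaceable.T_surjective c hc
end

section
/- Let 𝕜 be ℝ or ℂ, let X be a Banach space over 𝕜, let p ∈ [1, ∞), and let (f_k)_{k∈ℕ} be a sequence of injective functions f_k : ℕ → ℕ with pairwise disjoint ranges whose union is all of ℕ. For a scalar sequence b = (b_k) with ∑_k |b_k| < ∞, let Ψ(b) : ℓp(X) → ℓp(X) be the continuous linear operator defined coordinatewise by (Ψ(b)(a))_j = ∑_k b_k · a_{f_k(j)}. Then every operator S in the operator-norm closure of the set {Ψ(b) : b ∈ ℓ1} in L(ℓp(X)) is either the zero operator or surjective. -/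
open scoped ENNReal

set_option maxHeartbeats 4000000 in
/-- With `f k : ℕ → ℕ` injections with pairwise disjoint ranges covering `ℕ`,
`1 ≤ p < ∞`, and `Ψ b` the operator on `ℓp(X)` given coordinatewise by
`(Ψ b a)_j = ∑' k, b k • a (f k j)` for `b ∈ ℓ1`, every operator in the operator-norm
closure of the image of `Ψ` is either zero or surjective. -/
theorem closure_of_combination_operators_surjective
    {𝕜 X : Type} [RCLike 𝕜] [NormedAddCommGroup X] [NormedSpace 𝕜 X]
    [CompleteSpace X] (p : ℝ≥0∞) [Fact (1 ≤ p)] (hp : p ≠ ∞)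
    (f : ℕ → ℕ → ℕ) (hf : ∀ k, Function.Injective (f k))
    (hdisj : ∀ k l, k ≠ l → Disjoint (Set.range (f k)) (Set.range (f l)))
    (hcover : ∀ m : ℕ, ∃ k j, f k j = m)
    (Ψ : lp (fun _ : ℕ => 𝕜) 1 →
        (lp (fun _ : ℕ => X) p →L[𝕜] lp (fun _ : ℕ => X) p))
    (hΨ : ∀ (b : lp (fun _ : ℕ => 𝕜) 1) (a : lp (fun _ : ℕ => X) p) (j : ℕ),
      (Ψ b a : ∀ _ : ℕ, X) j = ∑' k, b k • a (f k j))
    (S : lp (fun _ : ℕ => X) p →L[𝕜] lp (fun _ : ℕ => X) p)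
    (hS : S ∈ closure (Set.range Ψ)) :
    S = 0 ∨ Function.Surjective ⇑S := by
  classical
  by_cases hS0 : S = 0
  · exact Or.inl hS0
  right
  have hp1 : (1 : ℝ≥0∞) ≤ p := Fact.out
  have hp0 : p ≠ 0 := (zero_lt_one.trans_le hp1).ne'
  have hq0 : (0 : ℝ) < p.toReal := ENNReal.toReal_pos hp0 hp
  -- the bijection (j, k) ↦ f k j
  have hinj : Function.Injective (fun x : ℕ × ℕ => f x.2 x.1) := by
    rintro ⟨j1, k1⟩ ⟨j2, k2⟩ h
    simp only at h
    rcases eq_or_ne k1 k2 with rfl | hk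
    · cases hf k1 h; rfl
    · exact absurd ⟨j2, h.symm⟩ (Set.disjoint_left.mp (hdisj k1 k2 hk) ⟨j1, rfl⟩)
  have hsurj : Function.Surjective (fun x : ℕ × ℕ => f x.2 x.1) := by
    intro m; obtain ⟨k, j, hkj⟩ := hcover m; exact ⟨(j, k), hkj⟩
  let e : ℕ × ℕ ≃ ℕ := Equiv.ofBijective _ ⟨hinj, hsurj⟩
  have he : ∀ k j, e (j, k) = f k j := fun _ _ => rfl
  have hesymm : ∀ k j, e.symm (f k j) = (j, k) := fun k j => by
    rw [Equiv.symm_apply_eq]; rfl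
  have hinj2 : ∀ j, Function.Injective fun k => f k j := by
    intro j k1 k2 h
    have := hinj (a₁ := (j, k1)) (a₂ := (j, k2)) h
    exact (Prod.ext_iff.mp this).2
  set ε : ℝ := ‖S‖ / 3 with hεdef
  have hS' : (0 : ℝ) < ‖S‖ := norm_pos_iff.mpr hS0
  have hε0 : (0 : ℝ) < ε := by rw [hεdef]; linarith
  obtain ⟨T, hTmem, hT⟩ := Metric.mem_closure_iff.mp hS ε hε0
  obtain ⟨b, rfl⟩ := hTmem
  have hSb : ‖S - Ψ b‖ < ε := by rwa [dist_eq_norm] at hT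
  have hbsum : Summable fun k => ‖b k‖ := by
    have h1 : (0:ℝ) < (1 : ℝ≥0∞).toReal := by simp
    have := (lp.memℓp b).summable h1
    simpa using this
  set Ψb := Ψ b with hΨbdef
  -- KEY STEP 1 : a good finite functional
  have key : ∃ (n : ℕ) (w : ℕ → 𝕜),
      ε * (∑ k ∈ Finset.range n, ‖w k‖ ^ p.toReal) ^ (1 / p.toReal)
        < ‖∑ k ∈ Finset.range n, b k * w k‖ := by
    by_contra hcon
    push_neg at hcon
    -- Hölder-type consequence for nonnegative real sequences
    have holder : ∀ u : ℕ → ℝ, (∀ k, 0 ≤ u k) → ∀ n : ℕ,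
        ∑ k ∈ Finset.range n, ‖b k‖ * u k
          ≤ ε * (∑ k ∈ Finset.range n, u k ^ p.toReal) ^ (1 / p.toReal) := by
      intro u hu n
      set w : ℕ → 𝕜 := fun k =>
        (u k : 𝕜) * (if b k = 0 then 1 else (starRingEnd 𝕜) (b k) / (‖b k‖ : 𝕜)) with hwdef
      have hnorm : ∀ k, ‖w k‖ = u k := by
        intro k
        rcases eq_or_ne (b k) 0 with h0 | h0
        · simp [hwdef, h0, abs_of_nonneg (hu k)]
        · have hb0 : ‖b k‖ ≠ 0 := norm_ne_zero_iff.mpr h0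
          simp [hwdef, h0, norm_div, RCLike.norm_conj, abs_of_nonneg (hu k), hb0]
      have hmul : ∀ k, b k * w k = ((‖b k‖ * u k : ℝ) : 𝕜) := by
        intro k
        rcases eq_or_ne (b k) 0 with h0 | h0
        · simp [hwdef, h0]
        · have hb0 : ((‖b k‖ : ℝ) : 𝕜) ≠ 0 := by
            simpa using norm_ne_zero_iff.mpr h0
          rw [hwdef]
          simp only [if_neg h0]
          field_simp
          rw [mul_right_comm, RCLike.mul_conj]
          push_cast
          ring
      have h := hcon n w
      calc ∑ k ∈ Finset.range n, ‖b k‖ * u k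
          = ‖∑ k ∈ Finset.range n, b k * w k‖ := by
            rw [Finset.sum_congr rfl fun k _ => hmul k, ← RCLike.ofReal_sum,
              RCLike.norm_ofReal, abs_of_nonneg]
            exact Finset.sum_nonneg fun k _ =>
              mul_nonneg (norm_nonneg _) (hu k)
        _ ≤ ε * (∑ k ∈ Finset.range n, ‖w k‖ ^ p.toReal) ^ (1 / p.toReal) := h
        _ = ε * (∑ k ∈ Finset.range n, u k ^ p.toReal) ^ (1 / p.toReal) := by
            rw [Finset.sum_congr rfl fun k _ => by rw [hnorm k]]
    -- show ‖Ψb a‖ ≤ ε ‖a‖ for all a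
    have keybd : ∀ a : lp (fun _ : ℕ => X) p, ‖Ψb a‖ ≤ ε * ‖a‖ := by
      intro a
      set v : ℕ → ℝ := fun m => ‖a m‖ ^ p.toReal with hvdef
      have hv : Summable v := (lp.memℓp a).summable hq0
      have hv0 : ∀ m, 0 ≤ v m := fun m => Real.rpow_nonneg (norm_nonneg _) _
      have hve : Summable fun x : ℕ × ℕ => v (e x) := (e.summable_iff (f := v)).mpr hv
      have huq : ∀ j, Summable fun k => v (f k j) := by
        intro j
        exact hv.comp_injective (hinj2 j)
      set A : ℕ → ℝ := fun j => ∑' k, v (f k j) with hAdef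
      have hA0 : ∀ j, 0 ≤ A j := fun j => tsum_nonneg fun k => hv0 _
      have hfiber : ∀ j, HasSum (fun k => v (e (j, k))) (A j) := by
        intro j
        have : (fun k => v (e (j, k))) = fun k => v (f k j) := by
          funext k; rw [he]
        rw [this]
        exact (huq j).hasSum
      have hAsum : HasSum A (∑' m, v m) := by
        have := hve.hasSum.prod_fiberwise hfiber
        rwa [e.tsum_eq v] at this
      -- coordinatewise bound
      have hj : ∀ j, ‖(Ψb a : ∀ _ : ℕ, X) j‖ ≤ ε * A j ^ (1 / p.toReal) := by
        intro j
        have hbu : Summable fun k => ‖b k • a (f k j)‖ := by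
          refine Summable.of_nonneg_of_le (fun k => norm_nonneg _) (fun k => ?_)
            (hbsum.mul_right ‖a‖)
          rw [norm_smul]
          exact mul_le_mul_of_nonneg_left (lp.norm_apply_le_norm hp0 a (f k j))
            (norm_nonneg _)
        have htsum_le : ∑' k, ‖b k‖ * ‖a (f k j)‖ ≤ ε * A j ^ (1 / p.toReal) := by
          refine Real.tsum_le_of_sum_range_le
            (fun k => mul_nonneg (norm_nonneg _) (norm_nonneg _)) fun m => ?_
          refine (holder (fun k => ‖a (f k j)‖) (fun k => norm_nonneg _) m).trans ?_
          refine mul_le_mul_of_nonneg_left ?_ hε0.le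
          refine Real.rpow_le_rpow (Finset.sum_nonneg fun k _ =>
            Real.rpow_nonneg (norm_nonneg _) _) ?_ (by positivity)
          exact Summable.sum_le_tsum _ (fun k _ => hv0 _) (huq j)
        rw [hΨ b a j]
        refine (norm_tsum_le_tsum_norm hbu).trans ?_
        refine le_trans (le_of_eq ?_) htsum_le
        exact tsum_congr fun k => by rw [norm_smul]
      -- sum up
      refine lp.norm_le_of_tsum_le hq0 (by positivity) ?_
      have hsum_le : ∑' j, ‖(Ψb a : ∀ _ : ℕ, X) j‖ ^ p.toReal
          ≤ ∑' j, ε ^ p.toReal * A j := by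
        refine Summable.tsum_le_tsum (fun j => ?_) ((lp.memℓp (Ψb a)).summable hq0)
          (hAsum.summable.mul_left _)
        calc ‖(Ψb a : ∀ _ : ℕ, X) j‖ ^ p.toReal
            ≤ (ε * A j ^ (1 / p.toReal)) ^ p.toReal :=
              Real.rpow_le_rpow (norm_nonneg _) (hj j) hq0.le
          _ = ε ^ p.toReal * A j := by
              rw [Real.mul_rpow hε0.le (Real.rpow_nonneg (hA0 j) _), one_div,
                Real.rpow_inv_rpow (hA0 j) hq0.ne']
      refine hsum_le.trans ?_
      rw [tsum_mul_left, hAsum.tsum_eq, ← lp.norm_rpow_eq_tsum hq0 a,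
        ← Real.mul_rpow hε0.le (norm_nonneg _)]
    -- contradiction
    have hbound : ‖S‖ ≤ 2 * ε := by
      refine ContinuousLinearMap.opNorm_le_bound _ (by positivity) fun a => ?_
      have h1 : S a = (S - Ψb) a + Ψb a := by simp
      calc ‖S a‖ ≤ ‖(S - Ψb) a‖ + ‖Ψb a‖ := by rw [h1]; exact norm_add_le _ _
        _ ≤ ‖S - Ψb‖ * ‖a‖ + ε * ‖a‖ :=
            add_le_add ((S - Ψb).le_opNorm a) (keybd a)
        _ ≤ ε * ‖a‖ + ε * ‖a‖ := by
            have := mul_le_mul_of_nonneg_right hSb.le (norm_nonneg a)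
            linarith
        _ = 2 * ε * ‖a‖ := by ring
    rw [hεdef] at hbound
    linarith
  obtain ⟨n, w, hw⟩ := key
  -- KEY STEP 2 : construct an approximate right inverse and conclude
  set s : 𝕜 := ∑ k ∈ Finset.range n, b k * w k with hsdef
  set W : ℝ := (∑ k ∈ Finset.range n, ‖w k‖ ^ p.toReal) ^ (1 / p.toReal) with hWdef
  have hW0 : 0 ≤ W := Real.rpow_nonneg
    (Finset.sum_nonneg fun k _ => Real.rpow_nonneg (norm_nonneg _) _) _
  have hs0 : s ≠ 0 := by
    intro h
    rw [h, norm_zero] at hw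
    nlinarith [mul_nonneg hε0.le hW0]
  have hspos : 0 < ‖s‖ := norm_pos_iff.mpr hs0
  set d : ℕ → 𝕜 := fun k => s⁻¹ * (if k ∈ Finset.range n then w k else 0) with hddef
  have hd_zero : ∀ k ∉ Finset.range n, d k = 0 := by
    intro k hk
    simp only [hddef]
    rw [if_neg hk, mul_zero]
  have hdq_summable : Summable fun k => ‖d k‖ ^ p.toReal := by
    apply summable_of_ne_finset_zero (s := Finset.range n)
    intro k hk
    rw [hd_zero k hk, norm_zero, Real.zero_rpow hq0.ne']
  have hdq_sum : ∑' k, ‖d k‖ ^ p.toReal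
      = ‖s⁻¹‖ ^ p.toReal * ∑ k ∈ Finset.range n, ‖w k‖ ^ p.toReal := by
    rw [tsum_eq_sum (s := Finset.range n) (fun k hk => by
      rw [hd_zero k hk, norm_zero, Real.zero_rpow hq0.ne'])]
    rw [Finset.mul_sum]
    refine Finset.sum_congr rfl fun k hk => ?_
    rw [hddef]
    simp only [if_pos hk]
    rw [norm_mul, Real.mul_rpow (norm_nonneg _) (norm_nonneg _)]
  set M : ℝ := ‖s⁻¹‖ * W with hMdef
  have hM0 : 0 ≤ M := mul_nonneg (norm_nonneg _) hW0
  -- the underlying function of the right inverse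
  set g : lp (fun _ : ℕ => X) p → ℕ → X :=
    fun c m => d (e.symm m).2 • c (e.symm m).1 with hgdef
  have hg_mem : ∀ c : lp (fun _ : ℕ => X) p,
      Summable fun m => ‖g c m‖ ^ p.toReal := by
    intro c
    have hG : Summable fun x : ℕ × ℕ => ‖c x.1‖ ^ p.toReal * ‖d x.2‖ ^ p.toReal :=
      Summable.mul_of_nonneg ((lp.memℓp c).summable hq0) hdq_summable
        (fun j => Real.rpow_nonneg (norm_nonneg _) _)
        (fun k => Real.rpow_nonneg (norm_nonneg _) _)
    have := (e.symm.summable_iff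
      (f := fun x : ℕ × ℕ => ‖c x.1‖ ^ p.toReal * ‖d x.2‖ ^ p.toReal)).mpr hG
    refine this.congr fun m => ?_
    show ‖(c : ∀ _ : ℕ, X) (e.symm m).1‖ ^ p.toReal * ‖d (e.symm m).2‖ ^ p.toReal
      = ‖g c m‖ ^ p.toReal
    rw [hgdef]
    simp only
    rw [norm_smul, Real.mul_rpow (norm_nonneg _) (norm_nonneg _)]
    exact mul_comm _ _
  have hg_tsum : ∀ c : lp (fun _ : ℕ => X) p,
      ∑' m, ‖g c m‖ ^ p.toReal
        = (∑' k, ‖d k‖ ^ p.toReal) * ‖c‖ ^ p.toReal := by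
    intro c
    have hG : Summable fun x : ℕ × ℕ => ‖c x.1‖ ^ p.toReal * ‖d x.2‖ ^ p.toReal :=
      Summable.mul_of_nonneg ((lp.memℓp c).summable hq0) hdq_summable
        (fun j => Real.rpow_nonneg (norm_nonneg _) _)
        (fun k => Real.rpow_nonneg (norm_nonneg _) _)
    have h1 : ∑' m, ‖g c m‖ ^ p.toReal
        = ∑' x : ℕ × ℕ, ‖c x.1‖ ^ p.toReal * ‖d x.2‖ ^ p.toReal := by
      rw [← e.symm.tsum_eq (f := fun x : ℕ × ℕ => ‖c x.1‖ ^ p.toReal * ‖d x.2‖ ^ p.toReal)]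
      refine tsum_congr fun m => ?_
      show ‖g c m‖ ^ p.toReal
        = ‖(c : ∀ _ : ℕ, X) (e.symm m).1‖ ^ p.toReal * ‖d (e.symm m).2‖ ^ p.toReal
      rw [hgdef]
      simp only
      rw [norm_smul, Real.mul_rpow (norm_nonneg _) (norm_nonneg _)]
      exact mul_comm _ _
    rw [h1, Summable.tsum_prod' hG hG.prod_factor]
    have h2 : ∀ j : ℕ, ∑' k, ‖c j‖ ^ p.toReal * ‖d k‖ ^ p.toReal
        = ‖c j‖ ^ p.toReal * ∑' k, ‖d k‖ ^ p.toReal := fun j => tsum_mul_left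
    rw [tsum_congr h2, tsum_mul_right, lp.norm_rpow_eq_tsum hq0 c, mul_comm]
  -- the right inverse as a continuous linear map
  set Rlin : lp (fun _ : ℕ => X) p →ₗ[𝕜] lp (fun _ : ℕ => X) p :=
    { toFun := fun c => ⟨g c, memℓp_gen (hg_mem c)⟩
      map_add' := by
        intro c c'
        apply lp.ext
        funext m
        simp only [hgdef, lp.coeFn_add, Pi.add_apply, smul_add]
      map_smul' := by
        intro t c
        apply lp.ext
        funext m
        simp only [hgdef, lp.coeFn_smul, Pi.smul_apply, RingHom.id_apply]
        rw [smul_comm] } with hRdef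
  have hR_bound : ∀ c, ‖Rlin c‖ ≤ M * ‖c‖ := by
    intro c
    refine lp.norm_le_of_tsum_le hq0 (by positivity) ?_
    have h1 : ∑' m, ‖(Rlin c : ∀ _ : ℕ, X) m‖ ^ p.toReal
        = (∑' k, ‖d k‖ ^ p.toReal) * ‖c‖ ^ p.toReal := hg_tsum c
    rw [h1, hdq_sum]
    rw [hMdef]
    rw [Real.mul_rpow (mul_nonneg (norm_nonneg _) hW0) (norm_nonneg _),
      Real.mul_rpow (norm_nonneg _) hW0, hWdef, one_div,
      Real.rpow_inv_rpow (Finset.sum_nonneg fun k _ =>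
        Real.rpow_nonneg (norm_nonneg _) _) hq0.ne']
  set R : lp (fun _ : ℕ => X) p →L[𝕜] lp (fun _ : ℕ => X) p :=
    Rlin.mkContinuous M hR_bound with hRcdef
  have hR_norm : ‖R‖ ≤ M := Rlin.mkContinuous_norm_le hM0 hR_bound
  -- Ψb ∘ R = 1
  have hcomp : Ψb.comp R = 1 := by
    refine ContinuousLinearMap.ext fun c => ?_
    apply lp.ext
    funext j
    rw [ContinuousLinearMap.comp_apply, hΨ b (R c) j]
    have hRc : ∀ k, (R c : ∀ _ : ℕ, X) (f k j) = d k • c j := by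
      intro k
      have : (R c : ∀ _ : ℕ, X) (f k j)
          = d (e.symm (f k j)).2 • c (e.symm (f k j)).1 := rfl
      rw [this, hesymm]
    have h1 : (fun k => b k • (R c : ∀ _ : ℕ, X) (f k j))
        = fun k => (b k * d k) • c j := by
      funext k
      rw [hRc k, smul_smul]
    rw [h1]
    rw [tsum_eq_sum (s := Finset.range n) (fun k hk => by
      rw [hd_zero k hk, mul_zero, zero_smul])]
    rw [← Finset.sum_smul]
    have h2 : ∑ k ∈ Finset.range n, b k * d k = 1 := by
      have : ∑ k ∈ Finset.range n, b k * d k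
          = s⁻¹ * ∑ k ∈ Finset.range n, b k * w k := by
        rw [Finset.mul_sum]
        refine Finset.sum_congr rfl fun k hk => ?_
        rw [hddef]; simp only [if_pos hk]; ring
      rw [this, ← hsdef, inv_mul_cancel₀ hs0]
    rw [h2, one_smul]
    rfl
  -- conclude via a geometric series argument
  have hεM : ε * M < 1 := by
    rw [hMdef, norm_inv]
    rw [show ε * (‖s‖⁻¹ * W) = ε * W / ‖s‖ by field_simp]
    rw [div_lt_one hspos]
    exact hw
  have ht : ‖(1 : lp (fun _ : ℕ => X) p →L[𝕜] lp (fun _ : ℕ => X) p) - S.comp R‖ < 1 := by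
    have h1 : (1 : lp (fun _ : ℕ => X) p →L[𝕜] lp (fun _ : ℕ => X) p) - S.comp R
        = (Ψb - S).comp R := by
      rw [ContinuousLinearMap.sub_comp, hcomp]
    rw [h1]
    calc ‖(Ψb - S).comp R‖ ≤ ‖Ψb - S‖ * ‖R‖ := ContinuousLinearMap.opNorm_comp_le _ _
      _ ≤ ε * M := by
          refine mul_le_mul ?_ hR_norm (norm_nonneg _) hε0.le
          rw [← norm_neg]; simpa [neg_sub] using hSb.le
      _ < 1 := hεM
  set t := (1 : lp (fun _ : ℕ => X) p →L[𝕜] lp (fun _ : ℕ => X) p) - S.comp R with htdef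
  set u : (lp (fun _ : ℕ => X) p →L[𝕜] lp (fun _ : ℕ => X) p)ˣ := Units.oneSub t ht with hudef
  have hu : S.comp R = (u : lp (fun _ : ℕ => X) p →L[𝕜] lp (fun _ : ℕ => X) p) := by
    rw [hudef, Units.val_oneSub, htdef, sub_sub_cancel]
  intro c
  refine ⟨R ((↑u⁻¹ : lp (fun _ : ℕ => X) p →L[𝕜] lp (fun _ : ℕ => X) p) c), ?_⟩
  have h1 : S (R ((↑u⁻¹ : lp (fun _ : ℕ => X) p →L[𝕜] lp (fun _ : ℕ => X) p) c))
      = (S.comp R) ((↑u⁻¹ : lp (fun _ : ℕ => X) p →L[𝕜] lp (fun _ : ℕ => X) p) c) := rfl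
  rw [h1, hu, ← ContinuousLinearMap.mul_apply, Units.mul_inv, ContinuousLinearMap.one_apply]
end

section
/- Let 𝕜 be ℝ or ℂ, let V be an infinite-dimensional Banach space over 𝕜, let X be a Banach space over 𝕜, and let p ∈ [1, ∞]. If there exists an injective continuous linear operator T : V → ℓp(X), then the set of injective continuous linear operators from V to ℓp(X) is spaceable in L(V; ℓp(X)): there exists a closed infinite-dimensional 𝕜-linear subspace W of L(V; ℓp(X)) all of whose nonzero elements are injective. -/
set_option maxHeartbeats 4000000
open scoped ENNReal

noncomputable def myPair : ℕ ≃ ℕ × ℕ := (Denumerable.eqv (ℕ × ℕ)).symm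

section aux
variable {𝕜 X : Type} [RCLike 𝕜] [NormedAddCommGroup X] [NormedSpace 𝕜 X]
variable {p : ℝ≥0∞} [Fact (1 ≤ p)]

lemma hp_ne_zero : p ≠ 0 := (zero_lt_one.trans_le Fact.out).ne'

lemma hp_toReal_pos (hp : p ≠ ∞) : 0 < p.toReal :=
  ENNReal.toReal_pos hp_ne_zero hp

lemma memℓp_glue (a : lp (fun _ : ℕ => 𝕜) p) (y : lp (fun _ : ℕ => X) p) :
    Memℓp (fun n => a (myPair n).1 • y (myPair n).2) p := by
  rcases eq_or_ne p ∞ with hp | hp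
  · subst hp
    apply memℓp_infty
    refine ⟨‖a‖ * ‖y‖, ?_⟩
    rintro r ⟨n, rfl⟩
    simp only [norm_smul]
    exact mul_le_mul (lp.norm_apply_le_norm ENNReal.top_ne_zero a _)
      (lp.norm_apply_le_norm ENNReal.top_ne_zero y _) (norm_nonneg _) (lp.norm_nonneg' a)
  · have hpt : 0 < p.toReal := hp_toReal_pos hp
    apply memℓp_gen
    have ha : Summable (fun k : ℕ => ‖a k‖ ^ p.toReal) := (lp.memℓp a).summable hpt
    have hy : Summable (fun j : ℕ => ‖y j‖ ^ p.toReal) := (lp.memℓp y).summable hpt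
    have hsum : Summable (fun kj : ℕ × ℕ => ‖a kj.1‖ ^ p.toReal * ‖y kj.2‖ ^ p.toReal) :=
      Summable.mul_of_nonneg ha hy
        (fun _ => Real.rpow_nonneg (norm_nonneg _) _)
        (fun _ => Real.rpow_nonneg (norm_nonneg _) _)
    have h2 := (myPair.summable_iff
      (f := fun kj : ℕ × ℕ => ‖a kj.1‖ ^ p.toReal * ‖y kj.2‖ ^ p.toReal)).2 hsum
    refine h2.congr fun n => ?_
    simp [Function.comp, norm_smul, Real.mul_rpow (norm_nonneg _) (norm_nonneg _)]

noncomputable def glue (a : lp (fun _ : ℕ => 𝕜) p) (y : lp (fun _ : ℕ => X) p) :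
    lp (fun _ : ℕ => X) p := ⟨fun n => a (myPair n).1 • y (myPair n).2, memℓp_glue a y⟩

@[simp] lemma glue_apply (a : lp (fun _ : ℕ => 𝕜) p) (y : lp (fun _ : ℕ => X) p) (n : ℕ) :
    glue a y n = a (myPair n).1 • y (myPair n).2 := rfl

lemma norm_glue_le (a : lp (fun _ : ℕ => 𝕜) p) (y : lp (fun _ : ℕ => X) p) :
    ‖glue a y‖ ≤ ‖a‖ * ‖y‖ := by
  rcases eq_or_ne p ∞ with hp | hp
  · subst hp
    refine lp.norm_le_of_forall_le (mul_nonneg (lp.norm_nonneg' a) (lp.norm_nonneg' y))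
      fun n => ?_
    rw [glue_apply, norm_smul]
    exact mul_le_mul (lp.norm_apply_le_norm ENNReal.top_ne_zero a _)
      (lp.norm_apply_le_norm ENNReal.top_ne_zero y _) (norm_nonneg _) (lp.norm_nonneg' a)
  · have hpt : 0 < p.toReal := hp_toReal_pos hp
    refine lp.norm_le_of_tsum_le hpt (mul_nonneg (lp.norm_nonneg' a) (lp.norm_nonneg' y)) ?_
    have ha : Summable (fun k : ℕ => ‖a k‖ ^ p.toReal) := (lp.memℓp a).summable hpt
    have hy : Summable (fun j : ℕ => ‖y j‖ ^ p.toReal) := (lp.memℓp y).summable hpt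
    have hsum : Summable (fun kj : ℕ × ℕ => ‖a kj.1‖ ^ p.toReal * ‖y kj.2‖ ^ p.toReal) :=
      Summable.mul_of_nonneg ha hy
        (fun _ => Real.rpow_nonneg (norm_nonneg _) _)
        (fun _ => Real.rpow_nonneg (norm_nonneg _) _)
    have h0 : ∀ n : ℕ, ‖glue a y n‖ ^ p.toReal
        = ‖a (myPair n).1‖ ^ p.toReal * ‖y (myPair n).2‖ ^ p.toReal := fun n => by
      rw [glue_apply, norm_smul, Real.mul_rpow (norm_nonneg _) (norm_nonneg _)]
    have h1 : ∑' n : ℕ, ‖glue a y n‖ ^ p.toReal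
        = ∑' kj : ℕ × ℕ, ‖a kj.1‖ ^ p.toReal * ‖y kj.2‖ ^ p.toReal :=
      (tsum_congr h0).trans
        (myPair.tsum_eq (f := fun kj : ℕ × ℕ => ‖a kj.1‖ ^ p.toReal * ‖y kj.2‖ ^ p.toReal))
    calc ∑' n : ℕ, ‖glue a y n‖ ^ p.toReal
        = ∑' kj : ℕ × ℕ, ‖a kj.1‖ ^ p.toReal * ‖y kj.2‖ ^ p.toReal := h1
      _ = ∑' k : ℕ, ∑' j : ℕ, ‖a k‖ ^ p.toReal * ‖y j‖ ^ p.toReal :=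
          Summable.tsum_prod' hsum (fun k => (hy.mul_left (‖a k‖ ^ p.toReal)).congr fun j => rfl)
      _ = ∑' k : ℕ, ‖a k‖ ^ p.toReal * ∑' j : ℕ, ‖y j‖ ^ p.toReal :=
          tsum_congr fun k => tsum_mul_left
      _ = (∑' k : ℕ, ‖a k‖ ^ p.toReal) * ∑' j : ℕ, ‖y j‖ ^ p.toReal := tsum_mul_right
      _ = ‖a‖ ^ p.toReal * ‖y‖ ^ p.toReal := by
          rw [← lp.norm_rpow_eq_tsum hpt, ← lp.norm_rpow_eq_tsum hpt]
      _ = (‖a‖ * ‖y‖) ^ p.toReal :=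
          (Real.mul_rpow (lp.norm_nonneg' a) (lp.norm_nonneg' y)).symm
      _ ≤ (‖a‖ * ‖y‖) ^ p.toReal := le_rfl

lemma norm_glue_ge (a : lp (fun _ : ℕ => 𝕜) p) (y : lp (fun _ : ℕ => X) p) (j₀ : ℕ) :
    ‖a‖ * ‖y j₀‖ ≤ ‖glue a y‖ := by
  rcases eq_or_ne (y j₀) 0 with h0 | h0
  · simp [h0, lp.norm_nonneg']
  have hm : 0 < ‖y j₀‖ := norm_pos_iff.2 h0
  have key : ∀ k : ℕ, glue a y (myPair.symm (k, j₀)) = a k • y j₀ := by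
    intro k; rw [glue_apply, Equiv.apply_symm_apply]
  rcases eq_or_ne p ∞ with hp | hp
  · subst hp
    have hb : ∀ k : ℕ, ‖a k‖ ≤ ‖glue a y‖ / ‖y j₀‖ := by
      intro k
      rw [le_div_iff₀ hm]
      calc ‖a k‖ * ‖y j₀‖ = ‖glue a y (myPair.symm (k, j₀))‖ := by rw [key, norm_smul]
        _ ≤ ‖glue a y‖ := lp.norm_apply_le_norm ENNReal.top_ne_zero _ _
    have := lp.norm_le_of_forall_le
      (div_nonneg (lp.norm_nonneg' (glue a y)) hm.le) hb
    calc ‖a‖ * ‖y j₀‖ ≤ (‖glue a y‖ / ‖y j₀‖) * ‖y j₀‖ := by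
          exact mul_le_mul_of_nonneg_right this hm.le
      _ = ‖glue a y‖ := div_mul_cancel₀ _ hm.ne'
  · have hpt : 0 < p.toReal := hp_toReal_pos hp
    by_contra hcon
    push_neg at hcon
    have ha : Summable (fun k : ℕ => ‖a k‖ ^ p.toReal) := (lp.memℓp a).summable hpt
    have hg : Summable (fun n : ℕ => ‖glue a y n‖ ^ p.toReal) :=
      (lp.memℓp (glue a y)).summable hpt
    have hinj : Function.Injective (fun k : ℕ => myPair.symm (k, j₀)) := by
      intro k k' hkk'
      have := congrArg myPair hkk'
      simp only [Equiv.apply_symm_apply, Prod.mk.injEq] at this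
      exact this.1
    have hle : ∑' k : ℕ, (‖a k‖ * ‖y j₀‖) ^ p.toReal
        ≤ ∑' n : ℕ, ‖glue a y n‖ ^ p.toReal := by
      refine Summable.tsum_le_tsum_of_inj _ hinj
        (fun c _ => Real.rpow_nonneg (norm_nonneg _) _) (fun k => ?_) ?_ hg
      · rw [key, norm_smul]
      · refine (ha.mul_right (‖y j₀‖ ^ p.toReal)).congr fun k => ?_
        rw [← Real.mul_rpow (norm_nonneg _) (norm_nonneg _)]
    have hL : ∑' k : ℕ, (‖a k‖ * ‖y j₀‖) ^ p.toReal = (‖a‖ * ‖y j₀‖) ^ p.toReal := by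
      calc ∑' k : ℕ, (‖a k‖ * ‖y j₀‖) ^ p.toReal
          = ∑' k : ℕ, ‖a k‖ ^ p.toReal * ‖y j₀‖ ^ p.toReal :=
            tsum_congr fun k => Real.mul_rpow (norm_nonneg _) (norm_nonneg _)
        _ = (∑' k : ℕ, ‖a k‖ ^ p.toReal) * ‖y j₀‖ ^ p.toReal := tsum_mul_right
        _ = ‖a‖ ^ p.toReal * ‖y j₀‖ ^ p.toReal := by rw [← lp.norm_rpow_eq_tsum hpt]
        _ = (‖a‖ * ‖y j₀‖) ^ p.toReal :=
            (Real.mul_rpow (lp.norm_nonneg' a) (norm_nonneg _)).symm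
    rw [hL, ← lp.norm_rpow_eq_tsum hpt] at hle
    exact absurd hle (not_le.2 (Real.rpow_lt_rpow (lp.norm_nonneg' _) hcon hpt))
lemma glue_add_left (a₁ a₂ : lp (fun _ : ℕ => 𝕜) p) (y : lp (fun _ : ℕ => X) p) :
    glue (a₁ + a₂) y = glue a₁ y + glue a₂ y :=
  lp.ext (funext fun n => by
    simp only [glue_apply, lp.coeFn_add, Pi.add_apply, add_smul])

lemma glue_smul_left (c : 𝕜) (a : lp (fun _ : ℕ => 𝕜) p) (y : lp (fun _ : ℕ => X) p) :
    glue (c • a) y = c • glue a y :=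
  lp.ext (funext fun n => by
    simp only [glue_apply, lp.coeFn_smul, Pi.smul_apply, smul_eq_mul, mul_smul])

lemma glue_add_right (a : lp (fun _ : ℕ => 𝕜) p) (y₁ y₂ : lp (fun _ : ℕ => X) p) :
    glue a (y₁ + y₂) = glue a y₁ + glue a y₂ :=
  lp.ext (funext fun n => by
    simp only [glue_apply, lp.coeFn_add, Pi.add_apply, smul_add])

lemma glue_smul_right (c : 𝕜) (a : lp (fun _ : ℕ => 𝕜) p) (y : lp (fun _ : ℕ => X) p) :
    glue a (c • y) = c • glue a y :=
  lp.ext (funext fun n => by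
    simp only [glue_apply, lp.coeFn_smul, Pi.smul_apply]
    exact smul_comm _ _ _)

variable {V : Type} [NormedAddCommGroup V] [NormedSpace 𝕜 V]

noncomputable def opOf (T : V →L[𝕜] lp (fun _ : ℕ => X) p) (a : lp (fun _ : ℕ => 𝕜) p) :
    V →L[𝕜] lp (fun _ : ℕ => X) p :=
  LinearMap.mkContinuous
    { toFun := fun x => glue a (T x)
      map_add' := fun x x' => by
        show glue a (T (x + x')) = glue a (T x) + glue a (T x')
        rw [map_add, glue_add_right]
      map_smul' := fun c x => by
        show glue a (T (c • x)) = c • glue a (T x)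
        rw [map_smul, glue_smul_right] }
    (‖a‖ * ‖T‖)
    (fun x => by
      show ‖glue a (T x)‖ ≤ ‖a‖ * ‖T‖ * ‖x‖
      calc ‖glue a (T x)‖ ≤ ‖a‖ * ‖T x‖ := norm_glue_le a (T x)
        _ ≤ ‖a‖ * (‖T‖ * ‖x‖) := mul_le_mul_of_nonneg_left (T.le_opNorm x) (lp.norm_nonneg' a)
        _ = ‖a‖ * ‖T‖ * ‖x‖ := (mul_assoc _ _ _).symm)

@[simp] lemma opOf_apply (T : V →L[𝕜] lp (fun _ : ℕ => X) p) (a : lp (fun _ : ℕ => 𝕜) p)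
    (x : V) : opOf T a x = glue a (T x) := rfl

noncomputable def PhiL (T : V →L[𝕜] lp (fun _ : ℕ => X) p) :
    lp (fun _ : ℕ => 𝕜) p →L[𝕜] (V →L[𝕜] lp (fun _ : ℕ => X) p) :=
  LinearMap.mkContinuous
    { toFun := opOf T
      map_add' := fun a b => ContinuousLinearMap.ext fun x => by
        simp only [opOf_apply, ContinuousLinearMap.add_apply, glue_add_left]
      map_smul' := fun c a => ContinuousLinearMap.ext fun x => by
        simp only [opOf_apply, ContinuousLinearMap.smul_apply, glue_smul_left,
          RingHom.id_apply] }
    ‖T‖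
    (fun a => by
      show ‖opOf T a‖ ≤ ‖T‖ * ‖a‖
      rw [mul_comm]
      exact LinearMap.mkContinuous_norm_le _
        (mul_nonneg (lp.norm_nonneg' a) (norm_nonneg T)) _)

@[simp] lemma PhiL_apply (T : V →L[𝕜] lp (fun _ : ℕ => X) p) (a : lp (fun _ : ℕ => 𝕜) p) :
    PhiL T a = opOf T a := rfl

lemma linearIndependent_lp_single :
    LinearIndependent 𝕜 (fun n : ℕ => lp.single p n (1 : 𝕜)) := by
  rw [linearIndependent_iff']
  intro s g hg n hn
  have h1 : (∑ i ∈ s, g i • lp.single p i (1 : 𝕜)) n = 0 := by rw [hg]; rfl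
  have h2 : (∑ i ∈ s, g i • lp.single p i (1 : 𝕜)) n
      = ∑ i ∈ s, g i * (lp.single p i (1 : 𝕜) : ∀ _ : ℕ, 𝕜) n := by
    rw [lp.coeFn_sum, Finset.sum_apply]
    exact Finset.sum_congr rfl fun i _ => by
      rw [lp.coeFn_smul, Pi.smul_apply, smul_eq_mul]
  have h3 : ∑ i ∈ s, g i * (lp.single p i (1 : 𝕜) : ∀ _ : ℕ, 𝕜) n = g n := by
    rw [Finset.sum_eq_single n
      (fun i _ hin => by rw [lp.single_apply_ne p i _ (Ne.symm hin), mul_zero])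
      (fun hns => absurd hn hns), lp.single_apply_self, mul_one]
  rw [h2, h3] at h1
  exact h1
end aux

/-- If `V` is an infinite-dimensional Banach space and there exists an injective
continuous linear operator `V → ℓp(X)`, then the set of injective continuous linear
operators from `V` to `ℓp(X)` is spaceable in `L(V; ℓp(X))`: there is a closed
infinite-dimensional subspace all of whose nonzero elements are injective. -/
theorem injective_operators_spaceable_lp
    {𝕜 V X : Type} [RCLike 𝕜]
    [NormedAddCommGroup V] [NormedSpace 𝕜 V] [CompleteSpace V]
    [NormedAddCommGroup X] [NormedSpace 𝕜 X] [CompleteSpace X]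
    (hV : ¬ FiniteDimensional 𝕜 V)
    (p : ℝ≥0∞) [Fact (1 ≤ p)]
    (h : ∃ T : V →L[𝕜] lp (fun _ : ℕ => X) p, Function.Injective ⇑T) :
    ∃ W : Submodule 𝕜 (V →L[𝕜] lp (fun _ : ℕ => X) p),
      IsClosed (W : Set (V →L[𝕜] lp (fun _ : ℕ => X) p)) ∧
      ¬ FiniteDimensional 𝕜 W ∧
      ∀ S ∈ W, S ≠ 0 → Function.Injective ⇑S := by
  obtain ⟨T, hT⟩ := h
  have hVnt : Nontrivial V := by
    rcases subsingleton_or_nontrivial V with hs | hn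
    · exact absurd (inferInstance : FiniteDimensional 𝕜 V) hV
    · exact hn
  obtain ⟨x₀, hx₀⟩ := exists_ne (0 : V)
  have hy₀ : T x₀ ≠ 0 := fun hh => hx₀ (hT (hh.trans (map_zero T).symm))
  obtain ⟨j₀, hj₀⟩ : ∃ j, (T x₀) j ≠ 0 := by
    by_contra hko; push_neg at hko
    exact hy₀ (lp.eq_zero_iff_coeFn_eq_zero.2 (funext hko))
  have hm : 0 < ‖(T x₀) j₀‖ := norm_pos_iff.2 hj₀
  -- the lower bound for `PhiL T`
  have hc : ∀ a : lp (fun _ : ℕ => 𝕜) p,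
      ‖a‖ ≤ ‖x₀‖ / ‖(T x₀) j₀‖ * ‖PhiL T a‖ := by
    intro a
    have h4 : ‖a‖ * ‖(T x₀) j₀‖ ≤ ‖PhiL T a‖ * ‖x₀‖ :=
      (norm_glue_ge a (T x₀) j₀).trans ((PhiL T a).le_opNorm x₀)
    calc ‖a‖ ≤ (‖PhiL T a‖ * ‖x₀‖) / ‖(T x₀) j₀‖ := (le_div_iff₀ hm).2 h4
      _ = ‖x₀‖ / ‖(T x₀) j₀‖ * ‖PhiL T a‖ := by ring
  have halip : AntilipschitzWith (‖x₀‖ / ‖(T x₀) j₀‖).toNNReal (PhiL T) :=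
    ContinuousLinearMap.antilipschitz_of_bound (PhiL T) (fun a => by
      rw [Real.coe_toNNReal _ (div_nonneg (norm_nonneg x₀) hm.le)]
      exact hc a)
  have hinj : Function.Injective ⇑(PhiL T) := halip.injective
  refine ⟨LinearMap.range (PhiL T).toLinearMap, ?_, ?_, ?_⟩
  · have hcl : IsClosed (Set.range ⇑(PhiL T)) :=
      halip.isClosed_range (PhiL T).uniformContinuous
    have : (LinearMap.range (PhiL T).toLinearMap :
        Set (V →L[𝕜] lp (fun _ : ℕ => X) p)) = Set.range ⇑(PhiL T) := by
      rw [LinearMap.coe_range]; rfl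
    rw [this]; exact hcl
  · intro hfin
    have e' := LinearEquiv.ofInjective (PhiL T).toLinearMap hinj
    haveI : FiniteDimensional 𝕜 (lp (fun _ : ℕ => 𝕜) p) := Module.Finite.equiv e'.symm
    haveI := (linearIndependent_lp_single (𝕜 := 𝕜) (p := p)).finite
    exact not_finite ℕ
  · rintro S hS hS0
    obtain ⟨a, ha⟩ := LinearMap.mem_range.1 hS
    have ha' : PhiL T a = S := ha
    have ha0 : a ≠ 0 := by
      rintro rfl
      exact hS0 (ha'.symm.trans (map_zero (PhiL T)))
    have hz : ∀ z : V, S z = 0 → z = 0 := by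
      intro z hzz
      have hzz' : PhiL T a z = 0 := by rw [ha']; exact hzz
      obtain ⟨k, hk⟩ : ∃ k, a k ≠ 0 := by
        by_contra hko; push_neg at hko
        exact ha0 (lp.eq_zero_iff_coeFn_eq_zero.2 (funext hko))
      have hTz : T z = 0 := by
        refine lp.eq_zero_iff_coeFn_eq_zero.2 (funext fun j => ?_)
        have hco : a k • (T z) j = 0 := by
          calc a k • (T z) j = (glue a (T z)) (myPair.symm (k, j)) := by
                rw [glue_apply, Equiv.apply_symm_apply]
            _ = (PhiL T a z) (myPair.symm (k, j)) := rfl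
            _ = 0 := by rw [hzz']; rfl
        exact (smul_eq_zero.1 hco).resolve_left hk
      exact hT (hTz.trans (map_zero T).symm)
    intro x x' hxx'
    have hsub : S (x - x') = 0 := by rw [map_sub, hxx', sub_self]
    exact sub_eq_zero.1 (hz _ hsub)
end

section
/- Let 𝕜 be ℝ or ℂ, let V and X be Banach spaces over 𝕜, let p ∈ [1, ∞], and let T : V → ℓp(X) be an injective continuous linear operator. For a scalar sequence λ = (λ_n) with ∑_n |λ_n| < ∞, let Φ_T(λ) : V → ℓp(X) be the continuous linear operator defined coordinatewise by (Φ_T(λ)(x))_j = ∑_{n ≤ j} λ_n · (T(x))_{j − n}. Then every operator S in the operator-norm closure of the set {Φ_T(λ) : λ ∈ ℓ1} in L(V; ℓp(X)) is either the zero operator or injective. -/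
open scoped ENNReal
open Filter Topology

private lemma coord_tendsto_aux {X : Type}
    [NormedAddCommGroup X]
    {p : ℝ≥0∞} [Fact (1 ≤ p)]
    {f : ℕ → lp (fun _ : ℕ => X) p} {g : lp (fun _ : ℕ => X) p}
    (h : Tendsto f atTop (𝓝 g)) (j : ℕ) :
    Tendsto (fun i => (f i : ∀ _ : ℕ, X) j) atTop (𝓝 ((g : ∀ _ : ℕ, X) j)) := by
  have hp : p ≠ 0 := (lt_of_lt_of_le zero_lt_one Fact.out).ne'
  rw [tendsto_iff_norm_sub_tendsto_zero] at h ⊢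
  refine squeeze_zero (fun i => norm_nonneg _) (fun i => ?_) h
  have := lp.norm_apply_le_norm hp (f i - g) j
  simpa [lp.coeFn_sub] using this

/-- For an injective continuous linear `T : V → ℓp(X)`, with `Φ λ : V → ℓp(X)`
defined coordinatewise by `(Φ λ x)_j = ∑_{n ≤ j} λ n • (T x)_{j - n}` for `λ ∈ ℓ1`,
every operator in the operator-norm closure of `{Φ λ : λ ∈ ℓ1}` in `L(V; ℓp(X))` is
either the zero operator or injective. -/
theorem closure_of_shift_series_combinations_injective
    {𝕜 V X : Type} [RCLike 𝕜]
    [NormedAddCommGroup V] [NormedSpace 𝕜 V] [CompleteSpace V]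
    [NormedAddCommGroup X] [NormedSpace 𝕜 X] [CompleteSpace X]
    (p : ℝ≥0∞) [Fact (1 ≤ p)]
    (T : V →L[𝕜] lp (fun _ : ℕ => X) p) (hT : Function.Injective ⇑T)
    (Φ : lp (fun _ : ℕ => 𝕜) 1 → (V →L[𝕜] lp (fun _ : ℕ => X) p))
    (hΦ : ∀ (lam : lp (fun _ : ℕ => 𝕜) 1) (x : V) (j : ℕ),
      (Φ lam x : ∀ _ : ℕ, X) j =
        ∑ n ∈ Finset.Iic j, lam n • (T x : ∀ _ : ℕ, X) (j - n))
    (S : V →L[𝕜] lp (fun _ : ℕ => X) p)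
    (hS : S ∈ closure (Set.range Φ)) :
    S = 0 ∨ Function.Injective ⇑S := by
  by_cases h0 : S = 0
  · exact Or.inl h0
  right
  suffices key : ∀ x : V, S x = 0 → x = 0 by
    intro a b hab
    have : S (a - b) = 0 := by rw [map_sub, hab, sub_self]
    have := key _ this
    exact sub_eq_zero.mp this
  intro x hx
  by_contra hx0
  -- extract an approximating sequence
  obtain ⟨f, hf_mem, hf_lim⟩ := mem_closure_iff_seq_limit.mp hS
  choose u hu using hf_mem
  have hlim : Tendsto (fun i => Φ (u i)) atTop (𝓝 S) := by
    simpa only [hu] using hf_lim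
  -- pointwise limits
  have hpt : ∀ y : V, Tendsto (fun i => Φ (u i) y) atTop (𝓝 (S y)) := by
    intro y
    exact ((ContinuousLinearMap.apply 𝕜 (lp (fun _ : ℕ => X) p) y).continuous.tendsto S).comp
      hlim
  have hco : ∀ (y : V) (j : ℕ),
      Tendsto (fun i => (Φ (u i) y : ∀ _ : ℕ, X) j) atTop (𝓝 ((S y : ∀ _ : ℕ, X) j)) :=
    fun y j => coord_tendsto_aux (hpt y) j
  -- the first nonzero coordinate of T x
  have hTx : T x ≠ 0 := by
    intro h
    exact hx0 (hT (by rw [h, map_zero]))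
  have hex : ∃ m, (T x : ∀ _ : ℕ, X) m ≠ 0 := by
    by_contra h
    push_neg at h
    exact hTx (lp.ext (funext fun m => by simpa using h m))
  classical
  set m := Nat.find hex with hm_def
  have hm : (T x : ∀ _ : ℕ, X) m ≠ 0 := Nat.find_spec hex
  have hmin : ∀ k < m, (T x : ∀ _ : ℕ, X) k = 0 := by
    intro k hk
    have := Nat.find_min hex hk
    simpa using this
  -- coordinates of S x vanish
  have hSx : ∀ j, ((S x : ∀ _ : ℕ, X) j) = 0 := by
    intro j; rw [hx]; simp [lp.coeFn_zero]
  -- the coefficients tend to zero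
  have hcoef : ∀ k, Tendsto (fun i => (u i : ∀ _ : ℕ, 𝕜) k) atTop (𝓝 (0 : 𝕜)) := by
    intro k
    induction k using Nat.strong_induction_on with
    | _ k IH =>
      have h1 : Tendsto (fun i => ∑ n ∈ Finset.Iic (m + k),
          (u i : ∀ _ : ℕ, 𝕜) n • (T x : ∀ _ : ℕ, X) (m + k - n)) atTop (𝓝 0) := by
        have := hco x (m + k)
        rw [hSx (m + k)] at this
        simpa only [hΦ] using this
      -- restrict the sum to `Iic k`
      have hsum_eq : ∀ i, ∑ n ∈ Finset.Iic (m + k),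
          (u i : ∀ _ : ℕ, 𝕜) n • (T x : ∀ _ : ℕ, X) (m + k - n)
          = ∑ n ∈ Finset.Iic k, (u i : ∀ _ : ℕ, 𝕜) n • (T x : ∀ _ : ℕ, X) (m + k - n) := by
        intro i
        refine (Finset.sum_subset ?_ ?_).symm
        · intro n hn
          simp only [Finset.mem_Iic] at hn ⊢
          omega
        · intro n hn hn'
          simp only [Finset.mem_Iic] at hn hn'
          rw [hmin (m + k - n) (by omega), smul_zero]
      have h2 : Tendsto (fun i => ∑ n ∈ Finset.Iic k,
          (u i : ∀ _ : ℕ, 𝕜) n • (T x : ∀ _ : ℕ, X) (m + k - n)) atTop (𝓝 0) := by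
        simpa only [hsum_eq] using h1
      have h3 : Tendsto (fun i => ∑ n ∈ Finset.Iio k,
          (u i : ∀ _ : ℕ, 𝕜) n • (T x : ∀ _ : ℕ, X) (m + k - n)) atTop (𝓝 0) := by
        have : Tendsto (fun i => ∑ n ∈ Finset.Iio k,
            (u i : ∀ _ : ℕ, 𝕜) n • (T x : ∀ _ : ℕ, X) (m + k - n)) atTop
            (𝓝 (∑ n ∈ Finset.Iio k, (0 : 𝕜) • (T x : ∀ _ : ℕ, X) (m + k - n))) := by
          refine tendsto_finset_sum _ fun n hn => ?_
          exact (IH n (Finset.mem_Iio.mp hn)).smul_const _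
        simpa using this
      have h4 : Tendsto (fun i => (u i : ∀ _ : ℕ, 𝕜) k • (T x : ∀ _ : ℕ, X) m) atTop
          (𝓝 0) := by
        have hsplit : ∀ i, (u i : ∀ _ : ℕ, 𝕜) k • (T x : ∀ _ : ℕ, X) m
            = (∑ n ∈ Finset.Iic k, (u i : ∀ _ : ℕ, 𝕜) n • (T x : ∀ _ : ℕ, X) (m + k - n))
              - ∑ n ∈ Finset.Iio k, (u i : ∀ _ : ℕ, 𝕜) n • (T x : ∀ _ : ℕ, X) (m + k - n) := by
          intro i
          rw [← Finset.Iio_insert, Finset.sum_insert (by simp)]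
          simp
        simp only [hsplit]
        simpa using h2.sub h3
      -- deduce scalar convergence
      have hv : ‖(T x : ∀ _ : ℕ, X) m‖ ≠ 0 := norm_ne_zero_iff.mpr hm
      rw [tendsto_zero_iff_norm_tendsto_zero]
      have h5 : Tendsto (fun i => ‖(u i : ∀ _ : ℕ, 𝕜) k‖ * ‖(T x : ∀ _ : ℕ, X) m‖) atTop
          (𝓝 0) := by
        have := h4.norm
        simpa [norm_smul] using this
      have := h5.div_const ‖(T x : ∀ _ : ℕ, X) m‖
      simpa [mul_div_assoc, div_self hv] using this
  -- conclude S = 0, a contradiction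
  apply h0
  ext y j
  have hSy : Tendsto (fun i => ∑ n ∈ Finset.Iic j,
      (u i : ∀ _ : ℕ, 𝕜) n • (T y : ∀ _ : ℕ, X) (j - n)) atTop (𝓝 ((S y : ∀ _ : ℕ, X) j)) := by
    have := hco y j
    simpa only [hΦ] using this
  have hzero : Tendsto (fun i => ∑ n ∈ Finset.Iic j,
      (u i : ∀ _ : ℕ, 𝕜) n • (T y : ∀ _ : ℕ, X) (j - n)) atTop (𝓝 0) := by
    have : Tendsto (fun i => ∑ n ∈ Finset.Iic j,
        (u i : ∀ _ : ℕ, 𝕜) n • (T y : ∀ _ : ℕ, X) (j - n)) atTop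
        (𝓝 (∑ n ∈ Finset.Iic j, (0 : 𝕜) • (T y : ∀ _ : ℕ, X) (j - n))) :=
      tendsto_finset_sum _ fun n _ => (hcoef n).smul_const _
    simpa using this
  have := tendsto_nhds_unique hSy hzero
  simpa using this
end

section
/- Let 𝕜 be ℝ or ℂ, let E_1, …, E_m be infinite-dimensional Banach spaces over 𝕜, let X be a nontrivial Banach space over 𝕜, and let p ∈ [1, ∞). If there exists a continuous m-linear map M_0 : E_1 × ⋯ × E_m → ℓp(X) that is surjective, then there exists a 𝕜-linear subspace W of the space of continuous m-linear maps from E_1 × ⋯ × E_m to ℓp(X) with dim W = 𝔠 such that every nonzero element of W is surjective. (That is, the set of surjective continuous m-linear maps from E_1 × ⋯ × E_m to ℓp(X) is 𝔠-lineable.) -/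
open scoped ENNReal

namespace SurjLineable

variable {𝕜 X : Type} [RCLike 𝕜] [NormedAddCommGroup X] [NormedSpace 𝕜 X]

/-- pairing equivalence -/
noncomputable def d : ℕ × ℕ ≃ ℕ := Denumerable.eqv (ℕ × ℕ)

lemma d_inj : Function.Injective (d) := d.injective

lemma block_inj (k : ℕ) : Function.Injective (fun j => d (k, j)) := by
  intro a b h
  have := d.injective h
  simpa using (Prod.ext_iff.1 this).2

variable {p : ℝ≥0∞} [Fact (1 ≤ p)]

lemma q_pos (hp : p ≠ ∞) : 0 < p.toReal :=
  ENNReal.toReal_pos (zero_lt_one.trans_le (Fact.out : 1 ≤ p)).ne' hp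

lemma memℓp_comp (hp : p ≠ ∞) (x : lp (fun _ : ℕ => X) p) {f : ℕ → ℕ}
    (hf : Function.Injective f) : Memℓp (fun j => x (f j)) p := by
  apply memℓp_gen' (C := ‖x‖ ^ p.toReal)
  intro s
  calc ∑ j ∈ s, ‖x (f j)‖ ^ p.toReal
      = ∑ i ∈ s.image f, ‖x i‖ ^ p.toReal :=
        (Finset.sum_image (f := fun i => ‖x i‖ ^ p.toReal) (fun a _ b _ h => hf h)).symm
    _ ≤ ‖x‖ ^ p.toReal := lp.sum_rpow_le_norm_rpow (q_pos hp) x _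

lemma memℓp_extend (hp : p ≠ ∞) (y : lp (fun _ : ℕ => X) p) {f : ℕ → ℕ}
    (hf : Function.Injective f) :
    Memℓp (Function.extend f (fun j => y j) 0) p := by
  classical
  apply memℓp_gen' (C := ‖y‖ ^ p.toReal)
  intro s
  have h0 : ∀ n ∈ s, n ∉ s.filter (fun n => n ∈ Set.range f) →
      ‖Function.extend f (fun j => y j) 0 n‖ ^ p.toReal = 0 := by
    intro n hn hn'
    have : n ∉ Set.range f := by simpa [hn] using hn'
    rw [Function.extend_apply' _ _ _ (by simpa [Set.range] using this)]
    simp [Real.zero_rpow (q_pos hp).ne']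
  rw [← Finset.sum_subset (Finset.filter_subset _ s) h0]
  rw [← Finset.image_preimage f s (hf.injOn)]
  rw [Finset.sum_image (f := fun n => ‖Function.extend f (fun j => y j) 0 n‖ ^ p.toReal)
    (fun a _ b _ h => hf h)]
  calc ∑ j ∈ s.preimage f hf.injOn, ‖Function.extend f (fun j => y j) 0 (f j)‖ ^ p.toReal
      = ∑ j ∈ s.preimage f hf.injOn, ‖y j‖ ^ p.toReal := by
        refine Finset.sum_congr rfl fun j _ => ?_
        rw [hf.extend_apply]
    _ ≤ ‖y‖ ^ p.toReal := lp.sum_rpow_le_norm_rpow (q_pos hp) y _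


variable (𝕜) [CompleteSpace X]

/-- The operator reading off the `k`-th block. -/
noncomputable def Lop (hp : p ≠ ∞) (k : ℕ) :
    lp (fun _ : ℕ => X) p →L[𝕜] lp (fun _ : ℕ => X) p :=
  LinearMap.mkContinuous
    { toFun := fun x => ⟨fun j => x (d (k, j)), memℓp_comp hp x (block_inj k)⟩
      map_add' := fun x y => by
        ext j
        simp [lp.coeFn_add, Pi.add_apply]
        rfl
      map_smul' := fun c x => by
        ext j
        simp [lp.coeFn_smul] }
    1
    (fun x => by
      rw [one_mul]
      apply lp.norm_le_of_forall_sum_le (q_pos hp) (norm_nonneg x)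
      intro s
      calc ∑ j ∈ s, ‖x (d (k, j))‖ ^ p.toReal
          = ∑ i ∈ s.image (fun j => d (k, j)), ‖x i‖ ^ p.toReal :=
            (Finset.sum_image (f := fun i => ‖x i‖ ^ p.toReal)
              (fun a _ b _ h => block_inj k h)).symm
        _ ≤ ‖x‖ ^ p.toReal := lp.sum_rpow_le_norm_rpow (q_pos hp) x _)

lemma norm_Lop_le (hp : p ≠ ∞) (k : ℕ) : ‖Lop 𝕜 (X := X) hp k‖ ≤ 1 :=
  LinearMap.mkContinuous_norm_le _ zero_le_one _

lemma Lop_apply (hp : p ≠ ∞) (k : ℕ) (x : lp (fun _ : ℕ => X) p) (j : ℕ) :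
    (Lop 𝕜 hp k x) j = x (d (k, j)) := rfl

variable {𝕜}

/-- embedding into the `k`-th block -/
noncomputable def Rel (hp : p ≠ ∞) (k : ℕ) (y : lp (fun _ : ℕ => X) p) :
    lp (fun _ : ℕ => X) p :=
  ⟨Function.extend (fun j => d (k, j)) (fun j => y j) 0, memℓp_extend hp y (block_inj k)⟩

lemma Lop_Rel (hp : p ≠ ∞) (j k : ℕ) (y : lp (fun _ : ℕ => X) p) :
    Lop 𝕜 hp j (Rel hp k y) = if j = k then y else 0 := by
  ext i
  have : (Lop 𝕜 hp j (Rel hp k y)) i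
      = Function.extend (fun j => d (k, j)) (fun j => (y : ∀ _ : ℕ, X) j) 0 (d (j, i)) := rfl
  rw [this]
  by_cases h : j = k
  · subst h
    rw [(block_inj j).extend_apply]
    simp
  · rw [Function.extend_apply']
    · simp [h, lp.coeFn_zero]
    · rintro ⟨a, ha⟩
      exact h (Prod.ext_iff.1 (d.injective ha)).1.symm


variable (𝕜)

lemma Top_summable (hp : p ≠ ∞) {t : ℝ} (ht : t ∈ Set.Ioo (0:ℝ) 1) :
    Summable (fun k : ℕ => ((t : 𝕜) ^ k) • Lop 𝕜 (X := X) hp k) := by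
  apply Summable.of_norm_bounded (g := fun k => t ^ k)
    (summable_geometric_of_lt_one ht.1.le ht.2)
  intro k
  refine le_trans (norm_smul_le ((t:𝕜)^k) (Lop 𝕜 (X := X) hp k)) ?_
  calc ‖(t:𝕜)^k‖ * ‖Lop 𝕜 (X := X) hp k‖ ≤ ‖(t:𝕜)^k‖ * 1 := by
        gcongr
        exact norm_Lop_le 𝕜 hp k
    _ = |t| ^ k := by rw [mul_one, norm_pow, RCLike.norm_ofReal]
    _ = t ^ k := by rw [abs_of_pos ht.1]

/-- The operator `∑ₖ tᵏ Lₖ`. -/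
noncomputable def Top (hp : p ≠ ∞) (t : ℝ) :
    lp (fun _ : ℕ => X) p →L[𝕜] lp (fun _ : ℕ => X) p :=
  ∑' k : ℕ, ((t : 𝕜) ^ k) • Lop 𝕜 hp k

lemma Top_Rel (hp : p ≠ ∞) {t : ℝ} (ht : t ∈ Set.Ioo (0:ℝ) 1) (k : ℕ)
    (y : lp (fun _ : ℕ => X) p) :
    Top 𝕜 hp t (Rel hp k y) = ((t : 𝕜) ^ k) • y := by
  have h1 := ((Top_summable 𝕜 (X := X) hp ht).hasSum).mapL
    (ContinuousLinearMap.apply 𝕜 (lp (fun _ : ℕ => X) p) (Rel hp k y))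
  have h2 : ∀ k' : ℕ,
      (ContinuousLinearMap.apply 𝕜 (lp (fun _ : ℕ => X) p) (Rel hp k y))
        (((t : 𝕜) ^ k') • Lop 𝕜 hp k')
      = if k' = k then ((t : 𝕜) ^ k) • y else 0 := by
    intro k'
    have : (ContinuousLinearMap.apply 𝕜 (lp (fun _ : ℕ => X) p) (Rel hp k y))
        (((t : 𝕜) ^ k') • Lop 𝕜 hp k') = ((t : 𝕜) ^ k') • (Lop 𝕜 hp k' (Rel hp k y)) := rfl
    rw [this, Lop_Rel]
    split
    · rename_i h
      subst h
      rfl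
    · simp
  rw [funext h2] at h1
  exact h1.unique (hasSum_ite_eq k (((t : 𝕜) ^ k) • y))

end SurjLineable



/-- If there exists a surjective continuous `m`-linear map from a product
`E 1 × ⋯ × E m` of infinite-dimensional Banach spaces onto `ℓp(X)` (with `X` nontrivial
and `1 ≤ p < ∞`), then the set of surjective continuous `m`-linear maps is
`𝔠`-lineable: there is a subspace `W` of dimension `𝔠` of the space of continuous
`m`-linear maps all of whose nonzero elements are surjective. -/
theorem surjective_multilinear_maps_lineable
    {𝕜 X : Type} [RCLike 𝕜] [NormedAddCommGroup X] [NormedSpace 𝕜 X]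
    [CompleteSpace X] [Nontrivial X]
    (p : ℝ≥0∞) [Fact (1 ≤ p)] (hp : p ≠ ∞)
    (m : ℕ) (E : Fin m → Type)
    [∀ i, NormedAddCommGroup (E i)] [∀ i, NormedSpace 𝕜 (E i)]
    [∀ i, CompleteSpace (E i)]
    (hE : ∀ i, ¬ FiniteDimensional 𝕜 (E i))
    (M₀ : ContinuousMultilinearMap 𝕜 E (lp (fun _ : ℕ => X) p))
    (hM₀ : Function.Surjective ⇑M₀) :
    ∃ W : Submodule 𝕜 (ContinuousMultilinearMap 𝕜 E (lp (fun _ : ℕ => X) p)),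
      Module.rank 𝕜 W = Cardinal.continuum ∧
      ∀ M ∈ W, M ≠ 0 → Function.Surjective ⇑M := by
  classical
  obtain ⟨x₀, hx₀⟩ := exists_ne (0 : X)
  obtain ⟨g, _hg1, hgx₀⟩ := exists_dual_vector 𝕜 x₀ (norm_ne_zero_iff.mpr hx₀)
  have hnx₀ : ((‖x₀‖ : ℝ) : 𝕜) ≠ 0 := by
    simpa using norm_ne_zero_iff.mpr hx₀
  choose v hv using hM₀
  set u₀ : lp (fun _ : ℕ => X) p := lp.single p 0 x₀ with hu₀
  -- the family of multilinear maps
  set F : Set.Ioo (0:ℝ) 1 → ContinuousMultilinearMap 𝕜 E (lp (fun _ : ℕ => X) p) :=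
    fun t => (SurjLineable.Top 𝕜 hp (t : ℝ)).compContinuousMultilinearMap M₀ with hF
  -- the power-sequence family
  set G : Set.Ioo (0:ℝ) 1 → (Multiplicative ℕ → 𝕜) :=
    fun t => ⇑(powersHom 𝕜 (((t : ℝ) : 𝕜))) with hG
  have hGind : LinearIndependent 𝕜 G := by
    have h1 : Function.Injective (fun t : Set.Ioo (0:ℝ) 1 => powersHom 𝕜 (((t : ℝ) : 𝕜))) := by
      intro a b h
      have := (powersHom 𝕜).injective h
      exact Subtype.ext (RCLike.ofReal_injective this)
    exact (linearIndependent_monoidHom (Multiplicative ℕ) 𝕜).comp _ h1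
  -- the recovery linear map
  set ψ : ContinuousMultilinearMap 𝕜 E (lp (fun _ : ℕ => X) p) →ₗ[𝕜] (Multiplicative ℕ → 𝕜) :=
    { toFun := fun N k => ((‖x₀‖ : ℝ) : 𝕜)⁻¹ *
        g ((N (v (SurjLineable.Rel hp (Multiplicative.toAdd k) u₀))) 0)
      map_add' := by
        intro N₁ N₂
        funext k
        simp [ContinuousMultilinearMap.add_apply, lp.coeFn_add, Pi.add_apply, mul_add]
      map_smul' := by
        intro a N
        funext k
        simp [ContinuousMultilinearMap.smul_apply, lp.coeFn_smul, Pi.smul_apply,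
          smul_eq_mul, mul_left_comm] } with hψ
  have hcoe : ∀ (S : lp (fun _ : ℕ => X) p →L[𝕜] lp (fun _ : ℕ => X) p) (w : ∀ i, E i),
      (S.compContinuousMultilinearMap M₀) w = S (M₀ w) := fun _ _ => rfl
  have hψF : (⇑ψ ∘ F) = G := by
    funext t
    funext k
    have h1 : ψ (F t) k = ((‖x₀‖ : ℝ) : 𝕜)⁻¹ *
        g ((SurjLineable.Top 𝕜 hp (t : ℝ) (M₀ (v (SurjLineable.Rel hp (Multiplicative.toAdd k) u₀)))) 0) := rfl
    rw [Function.comp_apply, h1, hv, SurjLineable.Top_Rel 𝕜 hp t.2]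
    rw [hG]
    simp only [lp.coeFn_smul, Pi.smul_apply, powersHom_apply]
    rw [hu₀, lp.single_apply_self, map_smul, smul_eq_mul, hgx₀]
    field_simp
  have hFind : LinearIndependent 𝕜 F := by
    apply LinearIndependent.of_comp ψ
    rw [hψF]
    exact hGind
  refine ⟨Submodule.span 𝕜 (Set.range F), ?_, ?_⟩
  · rw [rank_span hFind, Cardinal.mk_range_eq F hFind.injective,
      Cardinal.mk_Ioo_real zero_lt_one]
  · intro M hM hM0
    rw [Finsupp.mem_span_range_iff_exists_finsupp] at hM
    obtain ⟨c, hc⟩ := hM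
    have hc0 : c ≠ 0 := by
      rintro rfl
      rw [Finsupp.sum_zero_index] at hc
      exact hM0 hc.symm
    -- the coefficients sequence
    set sq : ℕ → 𝕜 := fun k => ∑ t ∈ c.support, c t * (((t : ℝ) : 𝕜)) ^ k with hsq
    have hex : ∃ k, sq k ≠ 0 := by
      by_contra h
      push_neg at h
      apply hc0
      apply linearIndependent_iff.mp hGind c
      rw [Finsupp.linearCombination_apply]
      funext k
      rw [Finsupp.sum, Finset.sum_apply]
      have := h (Multiplicative.toAdd k)
      rw [hsq] at this
      simpa [hG, powersHom_apply, smul_eq_mul] using this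
    obtain ⟨k₀, hk₀⟩ := hex
    set S : lp (fun _ : ℕ => X) p →L[𝕜] lp (fun _ : ℕ => X) p :=
      ∑ t ∈ c.support, c t • SurjLineable.Top 𝕜 hp (t : ℝ) with hS
    have hMS : S.compContinuousMultilinearMap M₀ = M := by
      have hΦ : ∀ S' : lp (fun _ : ℕ => X) p →L[𝕜] lp (fun _ : ℕ => X) p,
          ((ContinuousLinearMap.compContinuousMultilinearMapL 𝕜 E
            (lp (fun _ : ℕ => X) p) (lp (fun _ : ℕ => X) p)).flip M₀) S'
          = S'.compContinuousMultilinearMap M₀ := fun _ => rfl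
      rw [← hΦ, hS, map_sum, ← hc, Finsupp.sum]
      refine Finset.sum_congr rfl fun t _ => ?_
      rw [map_smul, hΦ, hF]
    have hSRel : ∀ w : lp (fun _ : ℕ => X) p, S (SurjLineable.Rel hp k₀ w) = sq k₀ • w := by
      intro w
      rw [hS, ContinuousLinearMap.sum_apply]
      have : ∀ t ∈ c.support, (c t • SurjLineable.Top 𝕜 hp (t : ℝ)) (SurjLineable.Rel hp k₀ w)
          = (c t * (((t : ℝ) : 𝕜)) ^ k₀) • w := by
        intro t _
        rw [ContinuousLinearMap.smul_apply, SurjLineable.Top_Rel 𝕜 hp t.2, smul_smul]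
      rw [Finset.sum_congr rfl this, ← Finset.sum_smul]
    intro y
    obtain ⟨w, hw⟩ : ∃ w, M₀ w = SurjLineable.Rel hp k₀ ((sq k₀)⁻¹ • y) := ⟨v _, hv _⟩
    refine ⟨w, ?_⟩
    rw [← hMS, hcoe, hw, hSRel, smul_inv_smul₀ hk₀]
end

section
/- Let 𝕜 be ℝ or ℂ, let E be an infinite-dimensional Banach space over 𝕜, let X be a nontrivial Banach space over 𝕜, let p ∈ [1, ∞), and let m ∈ ℕ, m ≥ 1. If there exists a continuous m-linear map M_0 : E^m → ℓp(X) whose diagonal x ↦ M_0(x, …, x) is surjective onto ℓp(X), then there exists a 𝕜-linear subspace W of the space of continuous m-linear maps from E^m to ℓp(X) with dim W = 𝔠 such that for every nonzero M ∈ W the m-homogeneous polynomial x ↦ M(x, …, x) is surjective. (That is, the set of surjective m-homogeneous continuous polynomials from E to ℓp(X) is 𝔠-lineable.) -/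
open scoped ENNReal

noncomputable section SPLAux

namespace SPL

variable {𝕜 X : Type} [RCLike 𝕜] [NormedAddCommGroup X] [NormedSpace 𝕜 X]
variable {p : ℝ≥0∞} [Fact (1 ≤ p)]

lemma q_pos (hp : p ≠ ∞) : 0 < p.toReal :=
  ENNReal.toReal_pos (zero_lt_one.trans_le (Fact.out : (1 : ℝ≥0∞) ≤ p)).ne' hp

lemma pair_inj (i : ℕ) : Function.Injective (Nat.pair i) :=
  fun _ _ h => (Nat.pair_eq_pair.mp h).2

lemma memℓp_samp (hp : p ≠ ∞) (i : ℕ) (x : lp (fun _ : ℕ => X) p) :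
    Memℓp (fun k => x (Nat.pair i k)) p :=
  memℓp_gen (((lp.memℓp x).summable (q_pos hp)).comp_injective (pair_inj i))

/-- The sampling linear map `x ↦ (x (Nat.pair i k))_k`. -/
def sampL (hp : p ≠ ∞) (i : ℕ) :
    lp (fun _ : ℕ => X) p →ₗ[𝕜] lp (fun _ : ℕ => X) p where
  toFun x := ⟨fun k => x (Nat.pair i k), memℓp_samp hp i x⟩
  map_add' x y := lp.ext (funext fun k => by
    simp only [lp.coeFn_add, Pi.add_apply])
  map_smul' c x := lp.ext (funext fun k => by
    simp only [lp.coeFn_smul, Pi.smul_apply, RingHom.id_apply])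

lemma norm_sampL_le (hp : p ≠ ∞) (i : ℕ) (x : lp (fun _ : ℕ => X) p) :
    ‖sampL (𝕜 := 𝕜) hp i x‖ ≤ ‖x‖ := by
  have hq := q_pos hp
  refine lp.norm_le_of_tsum_le hq (norm_nonneg x) ?_
  rw [lp.norm_rpow_eq_tsum hq x]
  exact Summable.tsum_le_tsum_of_inj (Nat.pair i) (pair_inj i)
    (fun n _ => Real.rpow_nonneg (norm_nonneg _) _)
    (fun k => le_rfl)
    ((lp.memℓp _).summable hq) ((lp.memℓp x).summable hq)

/-- The sampling operator. -/
def samp (hp : p ≠ ∞) (i : ℕ) :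
    lp (fun _ : ℕ => X) p →L[𝕜] lp (fun _ : ℕ => X) p :=
  LinearMap.mkContinuous (sampL hp i) 1 (fun x => by
    simpa using norm_sampL_le hp i x)

lemma samp_apply (hp : p ≠ ∞) (i : ℕ) (x : lp (fun _ : ℕ => X) p) (k : ℕ) :
    (samp (𝕜 := 𝕜) hp i x : ∀ _ : ℕ, X) k = x (Nat.pair i k) := rfl

lemma norm_samp_le (hp : p ≠ ∞) (i : ℕ) :
    ‖samp (𝕜 := 𝕜) (X := X) (p := p) hp i‖ ≤ 1 :=
  LinearMap.mkContinuous_norm_le _ zero_le_one _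

/-- The spreading function. -/
def spreadFun (i : ℕ) (z : lp (fun _ : ℕ => X) p) : ∀ _ : ℕ, X :=
  fun n => if (Nat.unpair n).1 = i then z (Nat.unpair n).2 else 0

lemma memℓp_spread (hp : p ≠ ∞) (i : ℕ) (z : lp (fun _ : ℕ => X) p) :
    Memℓp (spreadFun i z) p := by
  have hq := q_pos hp
  apply memℓp_gen
  have hzero : ∀ n ∉ Set.range (Nat.pair i),
      ‖spreadFun i z n‖ ^ p.toReal = 0 := by
    intro n hn
    have hne : (Nat.unpair n).1 ≠ i := by
      intro h
      exact hn ⟨(Nat.unpair n).2, by rw [← h, Nat.pair_unpair]⟩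
    simp [spreadFun, hne, Real.zero_rpow hq.ne']
  refine ((pair_inj i).summable_iff hzero).mp ?_
  have hcomp : ((fun n => ‖spreadFun i z n‖ ^ p.toReal) ∘ Nat.pair i)
      = fun k => ‖z k‖ ^ p.toReal := by
    funext k
    simp [spreadFun, Nat.unpair_pair]
  rw [hcomp]
  exact (lp.memℓp z).summable hq

/-- The spreading element. -/
def spread (hp : p ≠ ∞) (i : ℕ) (z : lp (fun _ : ℕ => X) p) :
    lp (fun _ : ℕ => X) p :=
  ⟨spreadFun i z, memℓp_spread hp i z⟩

lemma samp_spread (hp : p ≠ ∞) (i j : ℕ) (z : lp (fun _ : ℕ => X) p) :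
    samp (𝕜 := 𝕜) hp i (spread hp j z) = if i = j then z else 0 := by
  apply lp.ext
  funext k
  rw [samp_apply]
  show spreadFun j z (Nat.pair i k) = _
  by_cases h : i = j
  · subst h
    simp [spreadFun, Nat.unpair_pair]
  · have h' : j ≠ i := fun hh => h hh.symm
    simp only [spreadFun, Nat.unpair_pair]
    rw [if_neg (fun hh => h hh), if_neg h]
    simp [lp.coeFn_zero]

variable [CompleteSpace X]

set_option maxHeartbeats 1000000 in
lemma summable_T (hp : p ≠ ∞) (r : Set.Ioo (0 : ℝ) 1) :
    Summable (fun i : ℕ => (((r : ℝ) : 𝕜) ^ i) • samp (𝕜 := 𝕜) (X := X) (p := p) hp i) := by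
  refine Summable.of_norm_bounded (summable_geometric_of_lt_one r.2.1.le r.2.2) ?_
  intro i
  calc ‖(((r : ℝ) : 𝕜) ^ i) • samp (𝕜 := 𝕜) (X := X) (p := p) hp i‖
      ≤ ‖((r : ℝ) : 𝕜) ^ i‖ * ‖samp (𝕜 := 𝕜) (X := X) (p := p) hp i‖ :=
        ContinuousLinearMap.opNorm_smul_le _ _
    _ ≤ (r : ℝ) ^ i * 1 := by
        rw [norm_pow, RCLike.norm_ofReal, abs_of_pos r.2.1]
        exact mul_le_mul_of_nonneg_left (norm_samp_le hp i)
          (pow_nonneg r.2.1.le i)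
    _ = (r : ℝ) ^ i := mul_one _

/-- The operator `T_r = ∑ r^i • samp i`. -/
def T (hp : p ≠ ∞) (r : Set.Ioo (0 : ℝ) 1) :
    lp (fun _ : ℕ => X) p →L[𝕜] lp (fun _ : ℕ => X) p :=
  ∑' i : ℕ, (((r : ℝ) : 𝕜) ^ i) • samp hp i

lemma T_apply (hp : p ≠ ∞) (r : Set.Ioo (0 : ℝ) 1) (x : lp (fun _ : ℕ => X) p) :
    T (𝕜 := 𝕜) hp r x = ∑' i : ℕ, (((r : ℝ) : 𝕜) ^ i) • samp (𝕜 := 𝕜) hp i x := by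
  have h := (ContinuousLinearMap.apply 𝕜 (lp (fun _ : ℕ => X) p) x).map_tsum
    (summable_T (𝕜 := 𝕜) hp r)
  simpa [T, ContinuousLinearMap.apply] using h

lemma vand (s : Finset (Set.Ioo (0 : ℝ) 1)) (a : Set.Ioo (0 : ℝ) 1 → 𝕜)
    (r₀ : Set.Ioo (0 : ℝ) 1) (hr₀ : r₀ ∈ s) (ha : a r₀ ≠ 0) :
    ∃ i : ℕ, ∑ r ∈ s, a r * ((r : ℝ) : 𝕜) ^ i ≠ 0 := by
  classical
  by_contra hcon
  push_neg at hcon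
  apply ha
  set v : Set.Ioo (0 : ℝ) 1 → 𝕜 := fun r => ((r : ℝ) : 𝕜) with hv
  have hvinj : Function.Injective v := by
    intro r r' h
    have h' : ((r : ℝ) : 𝕜) = ((r' : ℝ) : 𝕜) := h
    exact Subtype.ext (by exact_mod_cast h')
  set Q : Polynomial 𝕜 := ∏ r ∈ s.erase r₀, (Polynomial.X - Polynomial.C (v r)) with hQ
  have h1 : ∑ r ∈ s, a r * Q.eval (v r) = 0 := by
    have hterm : ∀ r ∈ s, a r * Q.eval (v r)
        = ∑ n ∈ Finset.range (Q.natDegree + 1), Q.coeff n * (a r * v r ^ n) := by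
      intro r _
      rw [Polynomial.eval_eq_sum_range, Finset.mul_sum]
      exact Finset.sum_congr rfl fun n _ => by ring
    rw [Finset.sum_congr rfl hterm, Finset.sum_comm]
    refine Finset.sum_eq_zero fun n _ => ?_
    rw [← Finset.mul_sum, hcon n, mul_zero]
  have h2 : ∑ r ∈ s.erase r₀, a r * Q.eval (v r) = 0 := by
    refine Finset.sum_eq_zero fun r hr => ?_
    rw [hQ, Polynomial.eval_prod, Finset.prod_eq_zero hr (by simp), mul_zero]
  have h3 : Q.eval (v r₀) ≠ 0 := by
    rw [hQ, Polynomial.eval_prod]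
    refine Finset.prod_ne_zero_iff.mpr fun r hr => ?_
    have hne : r ≠ r₀ := Finset.ne_of_mem_erase hr
    simp only [Polynomial.eval_sub, Polynomial.eval_X, Polynomial.eval_C]
    exact sub_ne_zero.mpr fun h => hne (hvinj h).symm
  have h4 : a r₀ * Q.eval (v r₀) = 0 := by
    have hsplit := Finset.sum_erase_add s (fun r => a r * Q.eval (v r)) hr₀
    simp only [h1, h2, zero_add] at hsplit
    exact hsplit
  rcases mul_eq_zero.mp h4 with h | h
  · exact h
  · exact absurd h h3

lemma key (hp : p ≠ ∞) (s : Finset (Set.Ioo (0 : ℝ) 1)) (a : Set.Ioo (0 : ℝ) 1 → 𝕜)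
    (r₀ : Set.Ioo (0 : ℝ) 1) (hr₀ : r₀ ∈ s) (ha : a r₀ ≠ 0)
    (y : lp (fun _ : ℕ => X) p) :
    ∃ x, ∑ r ∈ s, a r • T (𝕜 := 𝕜) hp r x = y := by
  obtain ⟨i₀, hi₀⟩ := vand s a r₀ hr₀ ha
  set c : 𝕜 := ∑ r ∈ s, a r * ((r : ℝ) : 𝕜) ^ i₀ with hc
  refine ⟨spread hp i₀ (c⁻¹ • y), ?_⟩
  have hT : ∀ r : Set.Ioo (0 : ℝ) 1,
      T (𝕜 := 𝕜) hp r (spread hp i₀ (c⁻¹ • y))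
        = (((r : ℝ) : 𝕜) ^ i₀) • (c⁻¹ • y) := by
    intro r
    rw [T_apply]
    rw [tsum_eq_single i₀ ?_]
    · rw [samp_spread, if_pos rfl]
    · intro i hi
      rw [samp_spread, if_neg hi, smul_zero]
  calc ∑ r ∈ s, a r • T (𝕜 := 𝕜) hp r (spread hp i₀ (c⁻¹ • y))
      = ∑ r ∈ s, (a r * ((r : ℝ) : 𝕜) ^ i₀) • (c⁻¹ • y) := by
        refine Finset.sum_congr rfl fun r _ => ?_
        rw [hT r, smul_smul]
    _ = c • (c⁻¹ • y) := by rw [← Finset.sum_smul, hc]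
    _ = y := by rw [smul_smul, mul_inv_cancel₀ hi₀, one_smul]

end SPL

end SPLAux

/-- If there is a continuous `m`-linear map `M₀ : E^m → ℓp(X)` (with `E`
infinite-dimensional Banach, `X` nontrivial Banach, `1 ≤ p < ∞`, `m ≥ 1`) whose
diagonal `x ↦ M₀ (x, …, x)` is surjective, then the set of surjective `m`-homogeneous
continuous polynomials from `E` to `ℓp(X)` is `𝔠`-lineable: there is a subspace `W` of
the continuous `m`-linear maps, of dimension `𝔠`, such that for every nonzero `M ∈ W`
the polynomial `x ↦ M (x, …, x)` is surjective. -/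
theorem surjective_polynomials_lineable
    {𝕜 E X : Type} [RCLike 𝕜]
    [NormedAddCommGroup E] [NormedSpace 𝕜 E] [CompleteSpace E]
    [NormedAddCommGroup X] [NormedSpace 𝕜 X] [CompleteSpace X] [Nontrivial X]
    (hE : ¬ FiniteDimensional 𝕜 E)
    (p : ℝ≥0∞) [Fact (1 ≤ p)] (hp : p ≠ ∞)
    (m : ℕ) (hm : 1 ≤ m)
    (M₀ : ContinuousMultilinearMap 𝕜 (fun _ : Fin m => E) (lp (fun _ : ℕ => X) p))
    (hM₀ : Function.Surjective (fun x : E => M₀ (fun _ => x))) :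
    ∃ W : Submodule 𝕜
        (ContinuousMultilinearMap 𝕜 (fun _ : Fin m => E) (lp (fun _ : ℕ => X) p)),
      Module.rank 𝕜 W = Cardinal.continuum ∧
      ∀ M ∈ W, M ≠ 0 → Function.Surjective (fun x : E => M (fun _ => x)) := by
  classical
  let N : Set.Ioo (0 : ℝ) 1 →
      ContinuousMultilinearMap 𝕜 (fun _ : Fin m => E) (lp (fun _ : ℕ => X) p) :=
    fun r => (SPL.T hp r).compContinuousMultilinearMap M₀
  have key : ∀ l : Set.Ioo (0 : ℝ) 1 →₀ 𝕜, l ≠ 0 →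
      Function.Surjective (fun x : E => (l.sum fun r a => a • N r) fun _ => x) := by
    intro l hl y
    obtain ⟨r₀, hr₀⟩ := Finsupp.support_nonempty_iff.mpr hl
    obtain ⟨x, hx⟩ := SPL.key hp l.support l r₀ hr₀ (Finsupp.mem_support_iff.mp hr₀) y
    obtain ⟨e, he⟩ := hM₀ x
    refine ⟨e, ?_⟩
    have hcalc : (l.sum fun r a => a • N r) (fun _ => e)
        = ∑ r ∈ l.support, l r • SPL.T (𝕜 := 𝕜) hp r (M₀ fun _ => e) := by
      rw [Finsupp.sum, ContinuousMultilinearMap.sum_apply]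
      exact Finset.sum_congr rfl fun r _ => by
        rw [ContinuousMultilinearMap.smul_apply]; rfl
    have he' : (M₀ fun _ => e) = x := he
    simp only [hcalc, he']
    exact hx
  have hNind : LinearIndependent 𝕜 N := by
    rw [linearIndependent_iff]
    intro l hl
    by_contra hl0
    obtain ⟨v, hv⟩ := exists_ne (0 : X)
    have hy : lp.single p 0 v ≠ (0 : lp (fun _ : ℕ => X) p) := by
      intro h
      apply hv
      have h0 := congrArg (fun f : lp (fun _ : ℕ => X) p => (f : ∀ _ : ℕ, X) 0) h
      simpa [lp.single_apply_self] using h0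
    obtain ⟨x, hx⟩ := key l hl0 (lp.single p 0 v)
    have hsum : (l.sum fun r a => a • N r) = 0 := by
      rw [← Finsupp.linearCombination_apply] at *
      exact hl
    rw [hsum] at hx
    exact hy (by simpa using hx.symm)
  refine ⟨Submodule.span 𝕜 (Set.range N), ?_, ?_⟩
  · rw [rank_span hNind, Cardinal.mk_range_eq _ hNind.injective]
    exact Cardinal.mk_Ioo_real zero_lt_one
  · intro M hM hM0
    obtain ⟨l, hl⟩ := Finsupp.mem_span_range_iff_exists_finsupp.mp hM
    have hl0 : l ≠ 0 := by
      rintro rfl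
      apply hM0
      rw [← hl]
      simp
    rw [← hl]
    exact key l hl0
end

section
/- Let 𝕜 be ℝ or ℂ, let V be an infinite-dimensional Banach space over 𝕜, let X be a Banach space over 𝕜, let p ∈ [1, ∞], and let m ∈ ℕ, m ≥ 1. If there exists a continuous m-linear map M_0 : V^m → ℓp(X) whose diagonal x ↦ M_0(x, …, x) is injective, then there exists a 𝕜-linear subspace W of the space of continuous m-linear maps from V^m to ℓp(X) with M_0 ∈ W and dim W = 𝔠, such that for every nonzero M ∈ W the m-homogeneous polynomial x ↦ M(x, …, x) is injective. (That is, the set of injective m-homogeneous continuous polynomials from V to ℓp(X) is (1,𝔠)-lineable.) -/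
set_option maxHeartbeats 1000000

open scoped ENNReal

namespace InjPolyAux

variable {𝕜 X : Type} [RCLike 𝕜]
  [NormedAddCommGroup X] [NormedSpace 𝕜 X] [CompleteSpace X]
  {p : ℝ≥0∞} [Fact (1 ≤ p)]

lemma hp0 : p ≠ 0 := by
  have h := Fact.out (p := 1 ≤ p)
  intro h0; rw [h0] at h; simp at h

def shiftFun (y : ℕ → X) : ℕ → X
  | 0 => 0
  | (n + 1) => y n

lemma memℓp_shiftFun (y : lp (fun _ : ℕ => X) p) : Memℓp (shiftFun (y : ℕ → X)) p := by
  rcases eq_or_ne p ∞ with rfl | hp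
  · refine memℓp_infty ⟨‖y‖, ?_⟩
    rintro r ⟨n, rfl⟩
    cases n with
    | zero => simpa [shiftFun] using lp.norm_nonneg' y
    | succ k => simpa [shiftFun] using lp.norm_apply_le_norm (hp0) y k
  · have hpt : 0 < p.toReal := ENNReal.toReal_pos hp0 hp
    apply memℓp_gen
    have h0 : ∀ n, n ∉ Set.range Nat.succ →
        ‖shiftFun (y : ℕ → X) n‖ ^ p.toReal = 0 := by
      intro n hn
      have : n = 0 := by
        cases n with
        | zero => rfl
        | succ k => exact absurd ⟨k, rfl⟩ hn
      subst this
      simp [shiftFun, Real.zero_rpow hpt.ne']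
    refine (Function.Injective.summable_iff Nat.succ_injective h0).mp ?_
    have hc : (fun n => ‖shiftFun (y : ℕ → X) n‖ ^ p.toReal) ∘ Nat.succ
        = fun n => ‖y n‖ ^ p.toReal := by
      funext n; simp [shiftFun, Function.comp]
    rw [hc]
    exact (lp.memℓp y).summable hpt


variable (𝕜 p) in
noncomputable def shiftL : lp (fun _ : ℕ => X) p →L[𝕜] lp (fun _ : ℕ => X) p :=
  LinearMap.mkContinuous
    { toFun := fun y => ⟨shiftFun (y : ℕ → X), memℓp_shiftFun y⟩
      map_add' := by
        intro y z
        apply lp.ext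
        funext n
        cases n with
        | zero =>
          simp [shiftFun]
          change (0:X) = shiftFun (y : ℕ → X) 0 + shiftFun (z : ℕ → X) 0
          simp [shiftFun]
        | succ k =>
          simp [shiftFun]
          change (y : ℕ → X) k + (z : ℕ → X) k = shiftFun (y : ℕ → X) (k+1) + shiftFun (z : ℕ → X) (k+1)
          rfl
      map_smul' := by
        intro c y
        apply lp.ext
        funext n
        cases n with
        | zero => simp [shiftFun]
        | succ k => simp [shiftFun] }
    1
    (by
      intro y
      rw [one_mul]
      rcases eq_or_ne p ∞ with rfl | hp
      · refine lp.norm_le_of_forall_le (lp.norm_nonneg' y) ?_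
        intro n
        cases n with
        | zero => simpa [shiftFun] using lp.norm_nonneg' y
        | succ k => simpa [shiftFun] using lp.norm_apply_le_norm hp0 y k
      · have hpt : 0 < p.toReal := ENNReal.toReal_pos hp0 hp
        refine lp.norm_le_of_tsum_le hpt (lp.norm_nonneg' y) ?_
        have hsum : Summable fun n => ‖shiftFun (y : ℕ → X) n‖ ^ p.toReal :=
          (memℓp_shiftFun y).summable hpt
        have h0 : ‖shiftFun (y : ℕ → X) 0‖ ^ p.toReal = 0 := by
          simp [shiftFun, Real.zero_rpow hpt.ne']
        calc ∑' n, ‖shiftFun (y : ℕ → X) n‖ ^ p.toReal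
            = ‖shiftFun (y : ℕ → X) 0‖ ^ p.toReal
              + ∑' n, ‖shiftFun (y : ℕ → X) (n + 1)‖ ^ p.toReal :=
              hsum.tsum_eq_zero_add
          _ = ∑' n, ‖y n‖ ^ p.toReal := by simp [h0, shiftFun, Real.zero_rpow hpt.ne']
          _ ≤ ‖y‖ ^ p.toReal := le_of_eq (lp.norm_rpow_eq_tsum hpt y).symm)

@[simp] lemma shiftL_apply_zero (y : lp (fun _ : ℕ => X) p) :
    (shiftL 𝕜 p y) 0 = 0 := rfl

@[simp] lemma shiftL_apply_succ (y : lp (fun _ : ℕ => X) p) (n : ℕ) :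
    (shiftL 𝕜 p y) (n + 1) = y n := rfl

lemma norm_shiftL_le : ‖shiftL 𝕜 p (X := X)‖ ≤ 1 :=
  LinearMap.mkContinuous_norm_le _ zero_le_one _


lemma shiftL_pow_apply (i : ℕ) (y : lp (fun _ : ℕ => X) p) (n : ℕ) :
    ((shiftL 𝕜 p ^ i) y) n = if i ≤ n then y (n - i) else 0 := by
  induction i generalizing n with
  | zero => simp
  | succ k ih =>
    rw [pow_succ', ContinuousLinearMap.mul_apply]
    cases n with
    | zero =>
      simp [shiftL_apply_zero]
    | succ n =>
      rw [shiftL_apply_succ, ih]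
      simp only [Nat.succ_sub_succ]
      congr 1
      simp [Nat.succ_le_succ_iff]

lemma norm_shiftL_pow_le (i : ℕ) : ‖(shiftL 𝕜 p (X := X)) ^ i‖ ≤ 1 := by
  induction i with
  | zero => rw [pow_zero]; exact ContinuousLinearMap.norm_id_le
  | succ k ih =>
    calc ‖(shiftL 𝕜 p (X := X)) ^ (k+1)‖ ≤ ‖(shiftL 𝕜 p (X := X)) ^ k‖ * ‖shiftL 𝕜 p (X := X)‖ := by
          rw [pow_succ]; exact norm_mul_le _ _
      _ ≤ 1 * 1 := mul_le_mul ih norm_shiftL_le (norm_nonneg _) zero_le_one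
      _ = 1 := one_mul 1

lemma summable_B (b : ℕ → 𝕜) (hb : Summable fun i => ‖b i‖) :
    Summable (fun i => b i • (shiftL 𝕜 p (X := X)) ^ i) := by
  refine Summable.of_norm_bounded hb ?_
  intro i
  refine (norm_smul_le (b i) ((shiftL 𝕜 p (X := X)) ^ i)).trans ?_
  calc ‖b i‖ * ‖(shiftL 𝕜 p (X := X)) ^ i‖ ≤ ‖b i‖ * 1 :=
        mul_le_mul_of_nonneg_left (norm_shiftL_pow_le i) (norm_nonneg _)
    _ = ‖b i‖ := mul_one _

variable (𝕜 p X) in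
noncomputable def B (b : ℕ → 𝕜) : lp (fun _ : ℕ => X) p →L[𝕜] lp (fun _ : ℕ => X) p :=
  ∑' i, b i • (shiftL 𝕜 p) ^ i

variable (𝕜 p) in
noncomputable def coordL (n : ℕ) : lp (fun _ : ℕ => X) p →L[𝕜] X :=
  LinearMap.mkContinuous
    { toFun := fun y => y n
      map_add' := fun y z => congrFun (lp.coeFn_add y z) n
      map_smul' := fun c y => congrFun (lp.coeFn_smul c y) n }
    1
    (fun y => by simpa using lp.norm_apply_le_norm (hp0 (p := p)) y n)

lemma B_apply_coord (b : ℕ → 𝕜) (hb : Summable fun i => ‖b i‖)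
    (y : lp (fun _ : ℕ => X) p) (n : ℕ) :
    (B 𝕜 X p b y) n = ∑ i ∈ Finset.range (n + 1), b i • y (n - i) := by
  have hsum := summable_B (p := p) (X := X) b hb
  have hs1 : HasSum (fun i => (b i • (shiftL 𝕜 p) ^ i) y) (B 𝕜 X p b y) :=
    hsum.hasSum.mapL (ContinuousLinearMap.apply 𝕜 (lp (fun _ : ℕ => X) p) y)
  have hs2 : HasSum (fun i => ((b i • (shiftL 𝕜 p) ^ i) y) n) ((B 𝕜 X p b y) n) :=
    hs1.mapL (coordL 𝕜 p (X := X) n)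
  rw [← hs2.tsum_eq]
  rw [tsum_eq_sum (s := Finset.range (n + 1)) ?_]
  · apply Finset.sum_congr rfl
    intro i hi
    have hin : i ≤ n := Nat.lt_succ_iff.mp (Finset.mem_range.mp hi)
    simp only [ContinuousLinearMap.smul_apply]
    rw [lp.coeFn_smul]
    simp only [Pi.smul_apply]
    rw [shiftL_pow_apply, if_pos hin]
  · intro i hi
    have hin : ¬ i ≤ n := by
      intro h
      exact hi (Finset.mem_range.mpr (Nat.lt_succ_iff.mpr h))
    simp only [ContinuousLinearMap.smul_apply]
    rw [lp.coeFn_smul]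
    simp only [Pi.smul_apply]
    rw [shiftL_pow_apply, if_neg hin, smul_zero]

lemma B_injective (b : ℕ → 𝕜) (hb : Summable fun i => ‖b i‖)
    (hbne : ∃ i, b i ≠ 0) :
    Function.Injective (B 𝕜 X p b) := by
  have h0 : ∀ y, B 𝕜 X p b y = 0 → y = 0 := by
    intro y hy
    apply lp.ext
    funext n
    induction n using Nat.strong_induction_on with
    | _ n ih =>
    classical
    set i₀ := Nat.find hbne with hi₀def
    have hbi₀ : b i₀ ≠ 0 := Nat.find_spec hbne
    have hblt : ∀ i < i₀, b i = 0 := fun i hi => by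
      by_contra h; exact Nat.find_min hbne hi h
    have hcoord : (B 𝕜 X p b y) (i₀ + n) = 0 := by
      rw [hy]; rfl
    rw [B_apply_coord b hb] at hcoord
    have hsingle : ∑ i ∈ Finset.range (i₀ + n + 1), b i • y (i₀ + n - i)
        = b i₀ • y n := by
      rw [Finset.sum_eq_single_of_mem i₀ (Finset.mem_range.mpr (Nat.lt_succ_of_le (Nat.le_add_right _ _)))]
      · have hnn : i₀ + n - i₀ = n := by omega
        rw [hnn]
      · intro i hi hne
        rcases lt_or_gt_of_ne hne with hlt | hgt
        · rw [hblt i hlt, zero_smul]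
        · have hile : i ≤ i₀ + n := Nat.lt_succ_iff.mp (Finset.mem_range.mp hi)
          have : i₀ + n - i < n := by omega
          rw [ih _ this]
          simp [lp.coeFn_zero]
    rw [hsingle] at hcoord
    rcases smul_eq_zero.mp hcoord with h | h
    · exact absurd h hbi₀
    · rw [h]; simp [lp.coeFn_zero]
  intro y z hyz
  have : B 𝕜 X p b (y - z) = 0 := by rw [map_sub, hyz, sub_self]
  have := h0 _ this
  exact sub_eq_zero.mp this


lemma B_zero_pow :
    B 𝕜 X p (fun i => (0 : 𝕜) ^ i) = ContinuousLinearMap.id 𝕜 (lp (fun _ : ℕ => X) p) := by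
  rw [B]
  rw [tsum_eq_single 0 ?_]
  · simp
    rfl
  · intro i hi
    rw [zero_pow hi, zero_smul]

lemma sum_smul_B {ι : Type*} (s : Finset ι) (c : ι → 𝕜) (b : ι → ℕ → 𝕜)
    (hb : ∀ t ∈ s, Summable fun i => ‖b t i‖) :
    ∑ t ∈ s, c t • B 𝕜 X p (b t) = B 𝕜 X p (fun i => ∑ t ∈ s, c t * b t i) := by
  have hsummands : ∀ t ∈ s,
      Summable fun i => (c t * b t i) • (shiftL 𝕜 p (X := X)) ^ i := by
    intro t ht
    refine summable_B _ ?_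
    simpa [norm_mul] using (hb t ht).mul_left ‖c t‖
  unfold B
  calc ∑ t ∈ s, c t • ∑' i, b t i • (shiftL 𝕜 p (X := X)) ^ i
      = ∑ t ∈ s, ∑' i, (c t * b t i) • (shiftL 𝕜 p (X := X)) ^ i := by
        refine Finset.sum_congr rfl fun t ht => ?_
        rw [← Summable.tsum_const_smul (c t) (summable_B _ (hb t ht))]
        congr 1; funext i; rw [smul_smul]
    _ = ∑' i, ∑ t ∈ s, (c t * b t i) • (shiftL 𝕜 p (X := X)) ^ i :=
        (Summable.tsum_finsetSum hsummands).symm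
    _ = ∑' i, (∑ t ∈ s, c t * b t i) • (shiftL 𝕜 p (X := X)) ^ i := by
        congr 1; funext i; rw [Finset.sum_smul]

lemma vandermonde {ι : Type*} {s : Finset ι} (r : ι → ℝ) (hr : Set.InjOn r s)
    {c : ι → 𝕜} {t₀ : ι} (ht₀ : t₀ ∈ s) (hc : c t₀ ≠ 0)
    (hz : ∀ i : ℕ, ∑ t ∈ s, c t * ((r t : ℝ) : 𝕜) ^ i = 0) : False := by
  classical
  set P : Polynomial 𝕜 :=
    ∏ t ∈ s.erase t₀, (Polynomial.X - Polynomial.C ((r t : ℝ) : 𝕜)) with hP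
  have hPt₀ : P.eval ((r t₀ : ℝ) : 𝕜) ≠ 0 := by
    rw [hP, Polynomial.eval_prod]
    refine Finset.prod_ne_zero_iff.mpr fun t ht => ?_
    simp only [Polynomial.eval_sub, Polynomial.eval_X, Polynomial.eval_C, sub_ne_zero]
    intro h
    have h' : r t₀ = r t := RCLike.ofReal_inj.mp h
    exact (Finset.mem_erase.mp ht).1 (hr (Finset.mem_of_mem_erase ht) ht₀ h'.symm)
  have key : ∑ t ∈ s, c t * P.eval ((r t : ℝ) : 𝕜) = c t₀ * P.eval ((r t₀ : ℝ) : 𝕜) := by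
    refine Finset.sum_eq_single_of_mem t₀ ht₀ fun t ht htne => ?_
    have : P.eval ((r t : ℝ) : 𝕜) = 0 := by
      rw [hP, Polynomial.eval_prod]
      refine Finset.prod_eq_zero (Finset.mem_erase.mpr ⟨htne, ht⟩) ?_
      simp
    rw [this, mul_zero]
  have key2 : ∑ t ∈ s, c t * P.eval ((r t : ℝ) : 𝕜) = 0 := by
    have heval : ∀ t : ι, P.eval ((r t : ℝ) : 𝕜)
        = ∑ i ∈ Finset.range (P.natDegree + 1), P.coeff i * ((r t : ℝ) : 𝕜) ^ i :=
      fun t => Polynomial.eval_eq_sum_range _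
    calc ∑ t ∈ s, c t * P.eval ((r t : ℝ) : 𝕜)
        = ∑ t ∈ s, ∑ i ∈ Finset.range (P.natDegree + 1),
            c t * (P.coeff i * ((r t : ℝ) : 𝕜) ^ i) := by
          refine Finset.sum_congr rfl fun t _ => ?_
          rw [heval t, Finset.mul_sum]
      _ = ∑ i ∈ Finset.range (P.natDegree + 1), ∑ t ∈ s,
            c t * (P.coeff i * ((r t : ℝ) : 𝕜) ^ i) := Finset.sum_comm
      _ = ∑ i ∈ Finset.range (P.natDegree + 1),
            P.coeff i * ∑ t ∈ s, c t * ((r t : ℝ) : 𝕜) ^ i := by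
          refine Finset.sum_congr rfl fun i _ => ?_
          rw [Finset.mul_sum]
          refine Finset.sum_congr rfl fun t _ => ?_
          ring
      _ = 0 := by simp [hz]
  rw [key] at key2
  exact hc ((mul_eq_zero.mp key2).resolve_right hPt₀)

end InjPolyAux

open InjPolyAux

/-- If there is a continuous `m`-linear map `M₀ : V^m → ℓp(X)` (with `V`
infinite-dimensional Banach, `1 ≤ p ≤ ∞`, `m ≥ 1`) whose diagonal `x ↦ M₀ (x, …, x)`
is injective, then there is a subspace `W` of the continuous `m`-linear maps with
`M₀ ∈ W` and `dim W = 𝔠` such that for every nonzero `M ∈ W` the `m`-homogeneous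
polynomial `x ↦ M (x, …, x)` is injective; i.e. the set of injective `m`-homogeneous
continuous polynomials from `V` to `ℓp(X)` is `(1, 𝔠)`-lineable. -/
theorem injective_polynomials_one_continuum_lineable
    {𝕜 V X : Type} [RCLike 𝕜]
    [NormedAddCommGroup V] [NormedSpace 𝕜 V] [CompleteSpace V]
    [NormedAddCommGroup X] [NormedSpace 𝕜 X] [CompleteSpace X]
    (hV : ¬ FiniteDimensional 𝕜 V)
    (p : ℝ≥0∞) [Fact (1 ≤ p)]
    (m : ℕ) (hm : 1 ≤ m)
    (M₀ : ContinuousMultilinearMap 𝕜 (fun _ : Fin m => V) (lp (fun _ : ℕ => X) p))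
    (hM₀ : Function.Injective (fun x : V => M₀ (fun _ => x))) :
    ∃ W : Submodule 𝕜
        (ContinuousMultilinearMap 𝕜 (fun _ : Fin m => V) (lp (fun _ : ℕ => X) p)),
      M₀ ∈ W ∧
      Module.rank 𝕜 W = Cardinal.continuum ∧
      ∀ M ∈ W, M ≠ 0 → Function.Injective (fun x : V => M (fun _ => x)) := by
  classical
  set E := lp (fun _ : ℕ => X) p with hE
  set S := Set.Ico (0 : ℝ) (1 / 2) with hS
  let f : S → ContinuousMultilinearMap 𝕜 (fun _ : Fin m => V) E := fun t =>
    (B 𝕜 X p (fun i => ((t : ℝ) : 𝕜) ^ i)).compContinuousMultilinearMap M₀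
  -- summability of coefficient families
  have hgeom : ∀ t : S, Summable fun i => ‖((t : ℝ) : 𝕜) ^ i‖ := by
    intro t
    have h1 : ∀ i : ℕ, ‖((t : ℝ) : 𝕜) ^ i‖ = |(t : ℝ)| ^ i := by
      intro i
      rw [norm_pow, RCLike.norm_ofReal]
    simp only [h1]
    exact summable_geometric_of_lt_one (abs_nonneg _)
      (by rw [abs_of_nonneg t.2.1]; linarith [t.2.2])
  -- key: any nontrivial finite combination has injective diagonal
  have key : ∀ c : S →₀ 𝕜, c ≠ 0 →
      Function.Injective (fun x : V => (c.sum fun t a => a • f t) (fun _ => x)) := by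
    intro c hc
    obtain ⟨t₀, ht₀⟩ : ∃ t, c t ≠ 0 := by
      by_contra h
      push_neg at h
      exact hc (Finsupp.ext fun t => h t)
    set bc : ℕ → 𝕜 := fun i => ∑ t ∈ c.support, c t * ((t : ℝ) : 𝕜) ^ i with hbc
    have hsummc : Summable fun i => ‖bc i‖ := by
      refine Summable.of_nonneg_of_le (fun i => norm_nonneg _)
        (fun i => ?_)
        ((summable_geometric_of_lt_one (by norm_num) (by norm_num : (1:ℝ)/2 < 1)).mul_left
          (∑ t ∈ c.support, ‖c t‖))
      rw [hbc]
      calc ‖∑ t ∈ c.support, c t * ((t : ℝ) : 𝕜) ^ i‖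
          ≤ ∑ t ∈ c.support, ‖c t * ((t : ℝ) : 𝕜) ^ i‖ := norm_sum_le _ _
        _ ≤ ∑ t ∈ c.support, ‖c t‖ * (1 / 2) ^ i := by
            refine Finset.sum_le_sum fun t _ => ?_
            rw [norm_mul, norm_pow, RCLike.norm_ofReal, abs_of_nonneg t.2.1]
            exact mul_le_mul_of_nonneg_left
              (pow_le_pow_left₀ t.2.1 (le_of_lt t.2.2) i) (norm_nonneg _)
        _ = (∑ t ∈ c.support, ‖c t‖) * (1 / 2) ^ i := by rw [Finset.sum_mul]
    have hbne : ∃ i, bc i ≠ 0 := by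
      by_contra h
      push_neg at h
      exact vandermonde (fun t : S => (t : ℝ))
        (Set.injOn_of_injective Subtype.val_injective) (Finsupp.mem_support_iff.mpr ht₀) ht₀ h
    have hcomb : (c.sum fun t a => a • f t)
        = (B 𝕜 X p bc).compContinuousMultilinearMap M₀ := by
      rw [Finsupp.sum]
      set Ψ := (ContinuousLinearMap.compContinuousMultilinearMapL 𝕜
        (fun _ : Fin m => V) E E).flip M₀ with hΨ
      have hΨap : ∀ A : E →L[𝕜] E, Ψ A = A.compContinuousMultilinearMap M₀ := fun A => rfl
      calc ∑ t ∈ c.support, c t • f t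
          = ∑ t ∈ c.support, c t • Ψ (B 𝕜 X p (fun i => ((t : ℝ) : 𝕜) ^ i)) := rfl
        _ = Ψ (∑ t ∈ c.support, c t • B 𝕜 X p (fun i => ((t : ℝ) : 𝕜) ^ i)) := by
            rw [map_sum]
            exact Finset.sum_congr rfl fun t _ => (Ψ.map_smul _ _).symm
        _ = Ψ (B 𝕜 X p bc) := by
            rw [sum_smul_B _ _ _ (fun t _ => hgeom t)]
        _ = (B 𝕜 X p bc).compContinuousMultilinearMap M₀ := hΨap _
    rw [hcomb]
    have : (fun x : V => (B 𝕜 X p bc).compContinuousMultilinearMap M₀ (fun _ => x))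
        = fun x : V => B 𝕜 X p bc (M₀ (fun _ => x)) := rfl
    rw [this]
    exact (B_injective bc hsummc hbne).comp hM₀
  -- the subspace
  refine ⟨Submodule.span 𝕜 (Set.range f), ?_, ?_, ?_⟩
  · -- M₀ ∈ span
    have h0mem : (0 : ℝ) ∈ S := by constructor <;> norm_num
    have hf0 : f ⟨0, h0mem⟩ = M₀ := by
      show (B 𝕜 X p (fun i => (((0:ℝ)) : 𝕜) ^ i)).compContinuousMultilinearMap M₀ = M₀
      have : (fun i => (((0:ℝ)) : 𝕜) ^ i) = fun i => (0 : 𝕜) ^ i := by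
        funext i; norm_num
      rw [this, B_zero_pow]
      ext v
      rfl
    exact hf0 ▸ Submodule.subset_span ⟨⟨0, h0mem⟩, rfl⟩
  · -- rank
    have hnt : Nontrivial V := by
      by_contra h
      have : Subsingleton V := not_nontrivial_iff_subsingleton.mp h
      exact hV (by infer_instance)
    have hli : LinearIndependent 𝕜 f := by
      rw [linearIndependent_iff]
      intro l hl
      by_contra hl0
      have hinj := key l hl0
      rw [Finsupp.linearCombination_apply] at hl
      rw [hl] at hinj
      obtain ⟨x, y, hxy⟩ := exists_pair_ne V
      exact hxy (hinj rfl)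
    rw [rank_span hli, Cardinal.mk_range_eq f hli.injective]
    exact Cardinal.mk_Ico_real (by norm_num)
  · -- injectivity of nonzero members
    intro M hM hMne
    rw [Finsupp.mem_span_range_iff_exists_finsupp] at hM
    obtain ⟨c, hcM⟩ := hM
    have hc : c ≠ 0 := by
      rintro rfl
      rw [Finsupp.sum_zero_index] at hcM
      exact hMne hcM.symm
    have := key c hc
    rw [hcM] at this
    exact this
end
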